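/- arXiv:1903.01937 — 11 statements merged into one kernel-verified Lean document; each statement's English description precedes it below -/
import Mathlib

section
/- A function f : ℝ → ℝ is continuous if and only if f has closed graph and f is returning. -/
/-- A function `f : X → ℝ` is *returning* if for every point `x` there is a positive
real `M` such that for every path-connected subset `C ⊆ X` containing `x` and every
`y ∈ C \ {x}` there exists `z ∈ C \ {x, y}` with `|f z| ≤ max M |f y|`. -/
def Returning {X : Type*} [TopologicalSpace X] (f : X → ℝ) : Prop :=
  ∀ x : X, ∃ M : ℝ, 0 < M ∧ ∀ C : Set X, IsPathConnected C → x ∈ C →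
    ∀ y ∈ C \ {x}, ∃ z ∈ C \ ({x, y} : Set X), |f z| ≤ max M |f y|

open Set


lemma mem_gadget {f : ℝ → ℝ} {lo hi : ℝ} {s : Set ℝ} {x : ℝ} :
    x ∈ Prod.fst '' {p : ℝ × ℝ | p.2 = f p.1 ∧ p.1 ∈ Icc lo hi ∧ p.2 ∈ s}
      ↔ x ∈ Icc lo hi ∧ f x ∈ s := by
  constructor
  · rintro ⟨p, ⟨h1, h2, h3⟩, rfl⟩
    exact ⟨h2, h1 ▸ h3⟩
  · rintro ⟨h1, h2⟩
    exact ⟨(x, f x), ⟨rfl, h1, h2⟩, rfl⟩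

lemma gadget_compact {f : ℝ → ℝ} (hG : IsClosed {p : ℝ × ℝ | p.2 = f p.1})
    (lo hi : ℝ) {s : Set ℝ} (hs : IsCompact s) :
    IsCompact (Prod.fst '' {p : ℝ × ℝ | p.2 = f p.1 ∧ p.1 ∈ Icc lo hi ∧ p.2 ∈ s}) := by
  have h1 : {p : ℝ × ℝ | p.2 = f p.1 ∧ p.1 ∈ Icc lo hi ∧ p.2 ∈ s}
      = {p : ℝ × ℝ | p.2 = f p.1} ∩ (Icc lo hi ×ˢ s) := by
    ext p; simp [Set.mem_prod, and_assoc]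
  rw [h1]
  exact ((isCompact_Icc.prod hs).inter_left hG).image continuous_fst

lemma no_right_blowup {f : ℝ → ℝ} (hG : IsClosed {p : ℝ × ℝ | p.2 = f p.1})
    {a u M : ℝ} (hau : a < u) (hM : 0 < M)
    (hbig : ∀ z ∈ Ioc a u, max M |f a| + 1 ≤ |f z|)
    (hret : ∀ C : Set ℝ, IsPathConnected C → a ∈ C →
      ∀ y ∈ C \ {a}, ∃ z ∈ C \ ({a, y} : Set ℝ), |f z| ≤ max M |f y|) : False := by
  set F : ℝ := max M |f a| with hF
  set W : Set (ℝ × ℝ) :=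
    {p : ℝ × ℝ | p.2 = f p.1 ∧ p.1 ∈ Icc a u ∧ p.2 ∈ Icc (-|f u|) (|f u|) ∩ {y : ℝ | F + 1 ≤ |y|}}
    with hW
  have hWmem : ∀ p : ℝ × ℝ, p ∈ W ↔ p.2 = f p.1 ∧ p.1 ∈ Icc a u ∧ |p.2| ≤ |f u| ∧ F + 1 ≤ |p.2| := by
    intro p; simp [hW, abs_le, and_comm, and_assoc]
  have hWcpt : IsCompact W := by
    have h1 : W = {p : ℝ × ℝ | p.2 = f p.1}
        ∩ (Icc a u ×ˢ (Icc (-|f u|) (|f u|) ∩ {y : ℝ | F + 1 ≤ |y|})) := by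
      ext p; simp [hW, Set.mem_prod, and_assoc]
    rw [h1]
    exact ((isCompact_Icc.prod (isCompact_Icc.inter_right
      (isClosed_le continuous_const continuous_abs))).inter_left hG)
  have hfu : F + 1 ≤ |f u| := hbig u ⟨hau, le_refl u⟩
  have hWne : W.Nonempty := by
    refine ⟨(u, f u), ?_⟩
    rw [hWmem (u, f u)]
    refine ⟨rfl, ⟨le_of_lt hau, le_refl u⟩, ?_, ?_⟩
    · exact le_refl (|f u|)
    · exact hfu
  obtain ⟨p₀, hp₀W, hp₀min⟩ := hWcpt.exists_isMinOn hWne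
    ((continuous_abs.comp continuous_snd).continuousOn)
  set m : ℝ := |p₀.2| with hm
  have hmF : F + 1 ≤ m := ((hWmem p₀).1 hp₀W).2.2.2
  have hmu : m ≤ |f u| := hp₀min (by
    rw [hWmem (u, f u)]
    refine ⟨rfl, ⟨le_of_lt hau, le_refl u⟩, ?_, ?_⟩
    · exact le_refl (|f u|)
    · exact hfu)
  have claim1 : ∀ z ∈ Ioc a u, m ≤ |f z| := by
    intro z hz
    by_contra h
    push_neg at h
    have hzW : (z, f z) ∈ W := by
      rw [hWmem]
      exact ⟨rfl, ⟨le_of_lt hz.1, hz.2⟩, le_trans (le_of_lt h) hmu, hbig z hz⟩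
    exact absurd (hp₀min hzW) (by simpa using h)
  set T : Set (ℝ × ℝ) := W ∩ {p : ℝ × ℝ | |p.2| ≤ m} with hT
  have hTcpt : IsCompact T := hWcpt.inter_right
    (isClosed_le (continuous_abs.comp continuous_snd) continuous_const)
  have hTne : T.Nonempty := ⟨p₀, hp₀W, le_refl m⟩
  obtain ⟨q₀, hq₀T, hq₀min⟩ := hTcpt.exists_isMinOn hTne (continuous_fst.continuousOn)
  obtain ⟨hq₀W, hq₀m⟩ := hq₀T
  rw [hWmem] at hq₀W
  obtain ⟨hq2, hq₀I, hq₀u, hq₀F⟩ := hq₀W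
  set y : ℝ := q₀.1 with hy
  have hfyq : f y = q₀.2 := hq2.symm
  have hya : a < y := by
    rcases lt_or_eq_of_le hq₀I.1 with h | h
    · exact h
    · exfalso
      have : |f a| ≤ F := le_max_right M |f a|
      rw [← h] at hfyq
      rw [← hfyq] at hq₀F
      linarith
  have hfym : |f y| = m := by
    have h1 : |f y| ≤ m := by rw [hfyq]; exact hq₀m
    have h2 : m ≤ |f y| := claim1 y ⟨hya, hq₀I.2⟩
    linarith
  have claim2 : ∀ z ∈ Ioo a y, m < |f z| := by
    intro z hz
    have hzu : z ∈ Ioc a u := ⟨hz.1, le_trans (le_of_lt hz.2) hq₀I.2⟩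
    rcases lt_or_eq_of_le (claim1 z hzu) with h | h
    · exact h
    · exfalso
      have hzT : (z, f z) ∈ T := by
        constructor
        · rw [hWmem]
          exact ⟨rfl, ⟨le_of_lt hzu.1, hzu.2⟩, h ▸ hmu, h ▸ hmF⟩
        · exact le_of_eq h.symm
      exact absurd (hq₀min hzT) (not_le.2 hz.2)
  -- apply returning
  have hIccne : (Icc a y).Nonempty := ⟨a, le_refl a, le_of_lt hya⟩
  obtain ⟨z, ⟨hzI, hzne⟩, hzle⟩ := hret (Icc a y) ((convex_Icc a y).isPathConnected hIccne)
    ⟨le_refl a, le_of_lt hya⟩ y ⟨⟨le_of_lt hya, le_refl y⟩, fun h => (ne_of_gt hya) (Set.mem_singleton_iff.mp h)⟩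
  have hzne' : z ≠ a ∧ z ≠ y := by
    constructor <;> intro h <;> apply hzne <;> simp [h]
  have hzO : z ∈ Ioo a y :=
    ⟨lt_of_le_of_ne hzI.1 (Ne.symm hzne'.1), lt_of_le_of_ne hzI.2 hzne'.2⟩
  have hMm : M ≤ m := le_trans (le_trans (le_max_left M |f a|) (by linarith : F ≤ F + 1)) hmF
  have : max M |f y| = m := by rw [hfym]; exact max_eq_right hMm
  rw [this] at hzle
  exact absurd hzle (not_le.2 (claim2 z hzO))

def PS (f : ℝ → ℝ) (lo hi c d : ℝ) : Set ℝ :=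
  Prod.fst '' {p : ℝ × ℝ | p.2 = f p.1 ∧ p.1 ∈ Icc lo hi ∧ p.2 ∈ {y : ℝ | |y| ≤ d ∧ c ≤ |y|}}

lemma band_compact (c d : ℝ) : IsCompact {y : ℝ | |y| ≤ d ∧ c ≤ |y|} := by
  have h1 : {y : ℝ | |y| ≤ d ∧ c ≤ |y|} = Icc (-d) d ∩ {y : ℝ | c ≤ |y|} := by
    ext y; simp [abs_le, and_comm]
  rw [h1]
  exact isCompact_Icc.inter_right (isClosed_le continuous_const continuous_abs)

lemma PS_compact {f : ℝ → ℝ} (hG : IsClosed {p : ℝ × ℝ | p.2 = f p.1}) (lo hi c d : ℝ) :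
    IsCompact (PS f lo hi c d) := gadget_compact hG lo hi (band_compact c d)

lemma mem_PS {f : ℝ → ℝ} {lo hi c d x : ℝ} :
    x ∈ PS f lo hi c d ↔ x ∈ Icc lo hi ∧ (|f x| ≤ d ∧ c ≤ |f x|) := by
  rw [PS, mem_gadget]; rfl

lemma no_right_unbounded {f : ℝ → ℝ} (hG : IsClosed {p : ℝ × ℝ | p.2 = f p.1})
    (hRet : Returning f) (b : ℝ)
    (hub : ∀ δ > (0:ℝ), ∀ B : ℝ, ∃ z ∈ Ioc b (b + δ), B < |f z|) : False := by
  obtain ⟨M, hM, hretb⟩ := hRet b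
  set K : ℝ := max M |f b| + 1 with hK
  have claim : ∀ ε : ℝ, 0 < ε → ε ≤ 1 → ∃ z ∈ Ioc b (b + ε), K ≤ |f z| ∧ |f z| ≤ K + 1 := by
    intro ε hε hε1
    obtain ⟨v, hv, hfv⟩ := hub ε hε (K + 1)
    by_cases hA : ∀ z ∈ Ioo b v, K < |f z|
    · exfalso
      refine no_right_blowup hG hv.1 hM ?_ hretb
      intro z hz
      rcases lt_or_eq_of_le hz.2 with h | h
      · exact le_of_lt (hA z ⟨hz.1, h⟩)
      · rw [h]; linarith
    · push_neg at hA
      obtain ⟨w, hw, hfw⟩ := hA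
      -- t := last point ≤ v with |f| ≤ K
      have hAcpt := PS_compact hG w v 0 K
      have hAne : (PS f w v 0 K).Nonempty := by
        refine ⟨w, mem_PS.2 ⟨⟨le_refl w, le_of_lt hw.2⟩, hfw, abs_nonneg _⟩⟩
      have ht := hAcpt.sSup_mem hAne
      set t : ℝ := sSup (PS f w v 0 K) with htdef
      rw [mem_PS] at ht
      obtain ⟨htI, htK, -⟩ := ht
      have htv : t < v := by
        rcases lt_or_eq_of_le htI.2 with h | h
        · exact h
        · exfalso; rw [h] at htK; linarith
      have hgt : ∀ z ∈ Ioc t v, K < |f z| := by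
        intro z hz
        by_contra h
        push_neg at h
        have hzA : z ∈ PS f w v 0 K :=
          mem_PS.2 ⟨⟨le_trans htI.1 (le_of_lt hz.1), hz.2⟩, h, abs_nonneg _⟩
        exact absurd (le_csSup hAcpt.bddAbove hzA) (not_le.2 hz.1)
      -- s := last point ≤ v with |f| ≤ K+1
      have hA2cpt := PS_compact hG t v 0 (K + 1)
      have hA2ne : (PS f t v 0 (K + 1)).Nonempty := by
        refine ⟨t, mem_PS.2 ⟨⟨le_refl t, le_of_lt htv⟩, by linarith, abs_nonneg _⟩⟩
      have hs := hA2cpt.sSup_mem hA2ne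
      set s : ℝ := sSup (PS f t v 0 (K + 1)) with hsdef
      rw [mem_PS] at hs
      obtain ⟨hsI, hsK, -⟩ := hs
      have hsv : s < v := by
        rcases lt_or_eq_of_le hsI.2 with h | h
        · exact h
        · exfalso; rw [h] at hsK; linarith
      by_cases hts : t < s
      · refine ⟨s, ⟨?_, ?_⟩, le_of_lt (hgt s ⟨hts, le_of_lt hsv⟩), hsK⟩
        · exact lt_of_lt_of_le hw.1 (le_trans htI.1 (le_of_lt hts))
        · exact le_trans (le_of_lt hsv) hv.2
      · exfalso
        -- |f| > K+1 on (t, v]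
        have hgt2 : ∀ z ∈ Ioc t v, K + 1 < |f z| := by
          intro z hz
          by_contra h
          push_neg at h
          have hzA : z ∈ PS f t v 0 (K + 1) :=
            mem_PS.2 ⟨⟨le_of_lt hz.1, hz.2⟩, h, abs_nonneg _⟩
          have := le_csSup hA2cpt.bddAbove hzA
          push_neg at hts
          exact absurd (le_trans this hts) (not_le.2 hz.1)
        obtain ⟨M', hM', hret'⟩ := hRet t
        set L : ℝ := max M' |f t| + 1 with hL
        have hP3closed : IsClosed (PS f t v (K + 1) L) := (PS_compact hG t v (K + 1) L).isClosed
        have htP3 : t ∉ PS f t v (K + 1) L := by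
          intro h
          rw [mem_PS] at h
          linarith [h.2.2]
        obtain ⟨δ', hδ', hball⟩ := Metric.isOpen_iff.1 hP3closed.isOpen_compl t htP3
        set u' : ℝ := min (t + δ' / 2) ((t + v) / 2) with hu'
        have htu' : t < u' := by
          apply lt_min
          · linarith
          · linarith [htv]
        have hbig' : ∀ z ∈ Ioc t u', max M' |f t| + 1 ≤ |f z| := by
          intro z hz
          have hzv : z ∈ Ioc t v := ⟨hz.1, by
            have := hz.2
            have h2 : u' ≤ (t + v) / 2 := min_le_right _ _
            linarith [htv]⟩
          by_contra h
          push_neg at h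
          have hzP3 : z ∈ PS f t v (K + 1) L := by
            refine mem_PS.2 ⟨⟨le_of_lt hzv.1, hzv.2⟩, le_of_lt h, le_of_lt (hgt2 z hzv)⟩
          have hzball : z ∈ Metric.ball t δ' := by
            rw [Metric.mem_ball, Real.dist_eq, abs_of_pos (by linarith [hz.1] : (0:ℝ) < z - t)]
            have h2 : u' ≤ t + δ' / 2 := min_le_left _ _
            linarith [hz.2]
          exact (hball hzball) hzP3
        exact no_right_blowup hG htu' hM' hbig' hret'
  -- now use the claim to contradict closed graph at b
  have hP4closed : IsClosed (PS f b (b + 1) K (K + 1)) := (PS_compact hG b (b + 1) K (K + 1)).isClosed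
  have hbcl : b ∈ closure (PS f b (b + 1) K (K + 1)) := by
    rw [Metric.mem_closure_iff]
    intro r hr
    obtain ⟨z, hz, hzb⟩ := claim (min (r / 2) 1) (lt_min (by linarith) one_pos) (min_le_right _ _)
    refine ⟨z, mem_PS.2 ⟨⟨le_of_lt hz.1, le_trans hz.2 (by linarith [min_le_right (r/2) (1:ℝ)])⟩,
      hzb.2, hzb.1⟩, ?_⟩
    rw [Real.dist_eq, abs_of_neg (by linarith [hz.1] : b - z < 0)]
    have := hz.2
    have h2 : min (r / 2) 1 ≤ r / 2 := min_le_left _ _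
    linarith
  rw [hP4closed.closure_eq] at hbcl
  rw [mem_PS] at hbcl
  have : |f b| ≤ max M |f b| := le_max_right _ _
  linarith [hbcl.2.2]

lemma returning_neg {f : ℝ → ℝ} (hRet : Returning f) : Returning (fun x => f (-x)) := by
  intro x
  obtain ⟨M, hM, h⟩ := hRet (-x)
  refine ⟨M, hM, ?_⟩
  intro C hC hxC y hy
  have hC' : IsPathConnected ((fun t : ℝ => -t) '' C) := hC.image continuous_neg
  have hx' : -x ∈ (fun t : ℝ => -t) '' C := ⟨x, hxC, rfl⟩
  have hy' : -y ∈ ((fun t : ℝ => -t) '' C) \ {-x} := by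
    refine ⟨⟨y, hy.1, rfl⟩, ?_⟩
    intro hcon
    exact hy.2 (by simpa using neg_injective (Set.mem_singleton_iff.mp hcon) ▸ rfl)
  obtain ⟨z, ⟨hz1, hz2⟩, hz3⟩ := h _ hC' hx' (-y) hy'
  obtain ⟨c, hcC, hcz⟩ := hz1
  refine ⟨c, ⟨hcC, ?_⟩, ?_⟩
  · intro hcon
    rcases hcon with hcon | hcon
    · exact hz2 (by rw [← hcz, hcon]; exact Set.mem_insert _ _)
    · apply hz2
      rw [← hcz]
      right
      simpa using hcon
  · have : f (-c) = f z := by rw [← hcz]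
    simpa [this] using hz3

lemma closed_graph_neg {f : ℝ → ℝ} (hG : IsClosed {p : ℝ × ℝ | p.2 = f p.1}) :
    IsClosed {p : ℝ × ℝ | p.2 = (fun x => f (-x)) p.1} := by
  have h1 : {p : ℝ × ℝ | p.2 = (fun x => f (-x)) p.1}
      = (fun p : ℝ × ℝ => (-p.1, p.2)) ⁻¹' {p : ℝ × ℝ | p.2 = f p.1} := rfl
  rw [h1]
  exact hG.preimage ((continuous_fst.neg).prodMk continuous_snd)

lemma continuous_of_closed_graph_returning {f : ℝ → ℝ}
    (hG : IsClosed {p : ℝ × ℝ | p.2 = f p.1}) (hRet : Returning f) : Continuous f := by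
  rw [continuous_iff_continuousAt]
  intro b
  -- local boundedness
  have hlb : ∃ δ > (0:ℝ), ∃ B : ℝ, ∀ z : ℝ, |z - b| ≤ δ → |f z| ≤ B := by
    by_contra h
    push_neg at h
    by_cases hR : ∀ δ > (0:ℝ), ∀ B : ℝ, ∃ z ∈ Ioc b (b + δ), B < |f z|
    · exact no_right_unbounded hG hRet b hR
    · push_neg at hR
      obtain ⟨δ₁, hδ₁, B₁, hB₁⟩ := hR
      by_cases hL : ∀ δ > (0:ℝ), ∀ B : ℝ, ∃ z ∈ Ico (b - δ) b, B < |f z|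
      · refine no_right_unbounded (closed_graph_neg hG) (returning_neg hRet) (-b) ?_
        intro δ hδ B
        obtain ⟨z, hz, hfz⟩ := hL δ hδ B
        refine ⟨-z, ⟨by linarith [hz.2], by linarith [hz.1]⟩, by simpa using hfz⟩
      · push_neg at hL
        obtain ⟨δ₂, hδ₂, B₂, hB₂⟩ := hL
        obtain ⟨z, hz, hfz⟩ := h (min δ₁ δ₂) (lt_min hδ₁ hδ₂) (max B₁ (max B₂ |f b|))
        rcases lt_trichotomy z b with hc | hc | hc
        · have : z ∈ Ico (b - δ₂) b := by
            constructor
            · have := abs_le.1 hz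
              have h2 : min δ₁ δ₂ ≤ δ₂ := min_le_right _ _
              linarith [this.1]
            · exact hc
          exact absurd hfz (not_lt.2 (le_trans (hB₂ z this)
            (le_trans (le_max_left _ _) (le_max_right _ _))))
        · rw [hc] at hfz
          exact absurd hfz (not_lt.2 (le_trans (le_max_right _ _) (le_max_right _ _)))
        · have : z ∈ Ioc b (b + δ₁) := by
            constructor
            · exact hc
            · have := abs_le.1 hz
              have h2 : min δ₁ δ₂ ≤ δ₁ := min_le_left _ _
              linarith [this.2]
          exact absurd hfz (not_lt.2 (le_trans (hB₁ z this) (le_max_left _ _)))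
  obtain ⟨δ₀, hδ₀, B, hB⟩ := hlb
  -- continuity at b using closed graph + local boundedness
  by_contra hc
  rw [Metric.continuousAt_iff] at hc
  push_neg at hc
  obtain ⟨ε, hε, hcc⟩ := hc
  set s : Set ℝ := Icc (-B) B ∩ {y : ℝ | ε ≤ |y - f b|} with hs
  have hscpt : IsCompact s := isCompact_Icc.inter_right
    (isClosed_le continuous_const ((continuous_id.sub continuous_const).abs))
  have hP5closed : IsClosed
      (Prod.fst '' {p : ℝ × ℝ | p.2 = f p.1 ∧ p.1 ∈ Icc (b - δ₀) (b + δ₀) ∧ p.2 ∈ s}) :=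
    (gadget_compact hG _ _ hscpt).isClosed
  have hbcl : b ∈ closure
      (Prod.fst '' {p : ℝ × ℝ | p.2 = f p.1 ∧ p.1 ∈ Icc (b - δ₀) (b + δ₀) ∧ p.2 ∈ s}) := by
    rw [Metric.mem_closure_iff]
    intro r hr
    obtain ⟨z, hz1, hz2⟩ := hcc (min r δ₀) (lt_min hr hδ₀)
    have hzd : |z - b| ≤ δ₀ := by
      rw [Real.dist_eq] at hz1
      have := lt_of_lt_of_le hz1 (min_le_right r δ₀)
      linarith [le_of_lt this]
    refine ⟨z, mem_gadget.2 ⟨?_, ?_, ?_⟩, ?_⟩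
    · have := abs_le.1 hzd; constructor <;> linarith [this.1, this.2]
    · exact abs_le.1 (hB z hzd)
    · rw [Real.dist_eq] at hz2; exact hz2
    · rw [dist_comm]
      exact lt_of_lt_of_le hz1 (min_le_left r δ₀)
  rw [hP5closed.closure_eq, mem_gadget] at hbcl
  have : ε ≤ |f b - f b| := hbcl.2.2
  simp at this
  linarith

lemma returning_of_continuous {f : ℝ → ℝ} (hf : Continuous f) : Returning f := by
  intro x
  refine ⟨|f x| + 1, by positivity, ?_⟩
  intro C hC hxC y hy
  have hyx : y ≠ x := fun h => hy.2 (by simp [h])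
  obtain ⟨δ, hδ, hδp⟩ := Metric.continuousAt_iff.1 (hf.continuousAt (x := x)) 1 one_pos
  have hpre : IsPreconnected C := hC.isConnected.isPreconnected
  have key : ∀ z : ℝ, |z - x| < δ → |f z| ≤ |f x| + 1 := by
    intro z hz
    have := hδp (show dist z x < δ by rwa [Real.dist_eq])
    rw [Real.dist_eq] at this
    have h1 := abs_le.1 (le_of_lt this)
    have h2 := abs_le.1 (le_refl |f x|)
    rw [abs_le]
    constructor <;> [linarith [abs_sub_abs_le_abs_sub (f z) (f x)];
      linarith [abs_sub_abs_le_abs_sub (f z) (f x)]]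
  rcases lt_or_gt_of_ne hyx with hlt | hlt
  · -- y < x
    set z : ℝ := x - min (δ / 2) ((x - y) / 2) with hzd
    have hmpos : 0 < min (δ / 2) ((x - y) / 2) := lt_min (by linarith) (by linarith)
    have hzy : y < z := by
      have := min_le_right (δ / 2) ((x - y) / 2)
      simp only [hzd]; linarith
    have hzx : z < x := by simp only [hzd]; linarith
    have hzC : z ∈ C := hpre.Icc_subset hy.1 hxC ⟨le_of_lt hzy, le_of_lt hzx⟩
    refine ⟨z, ⟨hzC, ?_⟩, ?_⟩
    · intro hcon
      rcases hcon with h | h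
      · exact absurd (Set.mem_singleton_iff.mp h) (ne_of_lt hzx)
      · exact absurd (Set.mem_singleton_iff.mp h) (ne_of_gt hzy)
    · have hzδ : |z - x| < δ := by
        rw [abs_of_neg (by linarith : z - x < 0)]
        have := min_le_left (δ / 2) ((x - y) / 2)
        simp only [hzd]; linarith
      exact le_trans (key z hzδ) (le_max_left _ _)
  · -- x < y
    set z : ℝ := x + min (δ / 2) ((y - x) / 2) with hzd
    have hmpos : 0 < min (δ / 2) ((y - x) / 2) := lt_min (by linarith) (by linarith)
    have hzy : z < y := by
      have := min_le_right (δ / 2) ((y - x) / 2)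
      simp only [hzd]; linarith
    have hzx : x < z := by simp only [hzd]; linarith
    have hzC : z ∈ C := hpre.Icc_subset hxC hy.1 ⟨le_of_lt hzx, le_of_lt hzy⟩
    refine ⟨z, ⟨hzC, ?_⟩, ?_⟩
    · intro hcon
      rcases hcon with h | h
      · exact absurd (Set.mem_singleton_iff.mp h) (ne_of_gt hzx)
      · exact absurd (Set.mem_singleton_iff.mp h) (ne_of_lt hzy)
    · have hzδ : |z - x| < δ := by
        rw [abs_of_pos (by linarith : (0:ℝ) < z - x)]
        have := min_le_left (δ / 2) ((y - x) / 2)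
        simp only [hzd]; linarith
      exact le_trans (key z hzδ) (le_max_left _ _)

theorem stmt_0 (f : ℝ → ℝ) :
    Continuous f ↔ IsClosed {p : ℝ × ℝ | p.2 = f p.1} ∧ Returning f := by
  constructor
  · intro hf
    exact ⟨isClosed_eq continuous_snd (hf.comp continuous_fst), returning_of_continuous hf⟩
  · rintro ⟨hG, hRet⟩
    exact continuous_of_closed_graph_returning hG hRet
end

section
/- Let X ⊆ ℝ be a closed subset and let f : X → ℝ have closed graph. Then f is weakly discontinuous, i.e., for every non-empty closed subset A ⊆ X, the set of continuity points of the restriction f↾A has non-empty interior in A. -/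
open Set Filter Topology

/-- Core lemma: if the graph of `g` is closed and `g` converges to `y` along an
ultrafilter converging to `a`, then `y = g a`. -/
lemma graph_limit {α : Type*} [TopologicalSpace α] {g : α → ℝ}
    (hg : IsClosed {p : α × ℝ | p.2 = g p.1}) {u : Ultrafilter α} {a : α} {y : ℝ}
    (hu : ↑u ≤ 𝓝 a) (hy : Tendsto g u (𝓝 y)) : y = g a := by
  have ht : Tendsto (fun x => (x, g x)) u (𝓝 (a, y)) :=
    (tendsto_id.mono_left hu).prodMk_nhds hy
  exact hg.mem_of_tendsto ht (Eventually.of_forall fun x => rfl)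

/-- The set where `g` is bounded by `n` is closed, for `g` with closed graph. -/
lemma bdd_set_closed {α : Type*} [TopologicalSpace α] {g : α → ℝ}
    (hg : IsClosed {p : α × ℝ | p.2 = g p.1}) (n : ℕ) :
    IsClosed {a : α | g a ∈ Icc (-(n : ℝ)) n} := by
  rw [← closure_subset_iff_isClosed]
  intro a ha
  rcases mem_closure_iff_ultrafilter.1 ha with ⟨u, hmem, hu⟩
  have hmap : Icc (-(n : ℝ)) n ∈ Ultrafilter.map g u := by
    exact mem_map.2 (u.mem_of_superset hmem fun x hx => hx)
  rcases (isCompact_Icc (a := -(n : ℝ)) (b := n)).ultrafilter_le_nhds'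
      (Ultrafilter.map g u) hmap with ⟨y, hyIcc, hy⟩
  have hya : y = g a := graph_limit hg hu hy
  show g a ∈ Icc (-(n:ℝ)) n
  exact hya ▸ hyIcc

/-- A function with closed graph is continuous at every point where it is
locally bounded. -/
lemma cont_at_of_interior {α : Type*} [TopologicalSpace α] {g : α → ℝ}
    (hg : IsClosed {p : α × ℝ | p.2 = g p.1}) (n : ℕ) {a : α}
    (ha : a ∈ interior {a : α | g a ∈ Icc (-(n : ℝ)) n}) : ContinuousAt g a := by
  refine (isCompact_Icc (a := -(n : ℝ)) (b := n)).tendsto_nhds_of_unique_mapClusterPt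
    ?_ fun y _ hy => ?_
  · exact eventually_of_mem (isOpen_interior.mem_nhds ha) fun x hx => interior_subset (s := {a : α | g a ∈ Icc (-(n:ℝ)) n}) hx
  · rcases mapClusterPt_iff_ultrafilter.1 hy with ⟨u, hu, hten⟩
    exact graph_limit hg hu hten

theorem stmt_1 (X : Set ℝ) (hX : IsClosed X) (f : X → ℝ)
    (hf : IsClosed {p : X × ℝ | p.2 = f p.1}) :
    ∀ A : Set X, A.Nonempty → IsClosed A →
      (interior {a : A | ContinuousAt (A.restrict f) a}).Nonempty := by
  intro A hne hA
  haveI : CompleteSpace X := hX.completeSpace_coe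
  haveI : CompleteSpace A := hA.completeSpace_coe
  haveI : Nonempty A := hne.to_subtype
  set g : A → ℝ := A.restrict f with hgdef
  have hg : IsClosed {p : A × ℝ | p.2 = g p.1} := by
    have hcont : Continuous fun p : A × ℝ => ((p.1 : X), p.2) :=
      (continuous_subtype_val.comp continuous_fst).prodMk continuous_snd
    exact hf.preimage hcont
  have hclosed : ∀ n : ℕ, IsClosed {a : A | g a ∈ Icc (-(n : ℝ)) n} :=
    bdd_set_closed hg
  have hcover : ⋃ n : ℕ, {a : A | g a ∈ Icc (-(n : ℝ)) n} = univ := by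
    ext a
    simp only [mem_iUnion, mem_univ, iff_true, mem_setOf_eq, mem_Icc]
    rcases exists_nat_ge |g a| with ⟨n, hn⟩
    exact ⟨n, by constructor <;> [linarith [neg_abs_le (g a)]; linarith [le_abs_self (g a)]]⟩
  rcases nonempty_interior_of_iUnion_of_closed hclosed hcover with ⟨n, x, hx⟩
  have hsub : interior {a : A | g a ∈ Icc (-(n : ℝ)) n} ⊆
      {a : A | ContinuousAt g a} := fun a ha => cont_at_of_interior hg n ha
  exact ⟨x, interior_maximal hsub isOpen_interior hx⟩
end

section
/- Let X ⊆ ℝ be a closed subset and let f : X → ℝ have closed graph. Then f is continuous at a point x ∈ X if and only if f is locally bounded at x, i.e., x has a neighborhood U_x in X such that f(U_x) is a bounded subset of ℝ. -/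
open Filter Topology

theorem stmt_2 (X : Set ℝ) (hX : IsClosed X) (f : X → ℝ)
    (hf : IsClosed {p : X × ℝ | p.2 = f p.1}) (x : X) :
    ContinuousAt f x ↔ ∃ U ∈ nhds x, Bornology.IsBounded (f '' U) := by
  constructor
  · intro h
    refine ⟨f ⁻¹' Metric.ball (f x) 1, h (Metric.ball_mem_nhds _ one_pos), ?_⟩
    exact Metric.isBounded_ball.subset (Set.image_preimage_subset _ _)
  · rintro ⟨U, hU, hbdd⟩
    rw [ContinuousAt]
    refine tendsto_of_subseq_tendsto fun u hu => ?_
    have hev : ∀ᶠ n in atTop, u n ∈ U := hu.eventually_mem hU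
    have hfreq : ∃ᶠ n in atTop, f (u n) ∈ f '' U :=
      (hev.mono fun n hn => Set.mem_image_of_mem f hn).frequently
    obtain ⟨y, _, φ, hφ, hy⟩ := tendsto_subseq_of_frequently_bounded hbdd hfreq
    have hxφ : Tendsto (u ∘ φ) atTop (𝓝 x) := hu.comp hφ.tendsto_atTop
    have hpair : Tendsto (fun n => ((u (φ n), f (u (φ n))) : X × ℝ)) atTop (𝓝 (x, y)) :=
      hxφ.prodMk_nhds hy
    have hmem : (x, y) ∈ {p : X × ℝ | p.2 = f p.1} :=
      hf.mem_of_tendsto hpair (Eventually.of_forall fun n => rfl)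
    have : y = f x := hmem
    exact ⟨φ, this ▸ hy⟩
end

section
/- Let X ⊆ ℝ be a closed subset and let f : X → ℝ have closed graph. Then the set C(f) of points of X at which f is continuous is open and dense in X. -/
open Filter Set Topology

theorem stmt_3 (X : Set ℝ) (hX : IsClosed X) (f : X → ℝ)
    (hf : IsClosed {p : X × ℝ | p.2 = f p.1}) :
    IsOpen {x : X | ContinuousAt f x} ∧ Dense {x : X | ContinuousAt f x} := by
  haveI : CompleteSpace X := hX.completeSpace_coe
  set A : ℕ → Set X := fun n => {z : X | |f z| ≤ n} with hA
  -- key lemma via ultrafilters and compactness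
  have aux : ∀ (x : X) (U : Ultrafilter X), ↑U ≤ 𝓝 x → ∀ M : ℝ,
      {z : X | |f z| ≤ M} ∈ U → Filter.Tendsto f U (𝓝 (f x)) ∧ |f x| ≤ M := by
    intro x U hU M hM
    have hM' : ↑(U.map f) ≤ 𝓟 (Set.Icc (-M) M) := by
      rw [Ultrafilter.coe_map, Filter.le_principal_iff, Filter.mem_map]
      filter_upwards [hM] with z hz
      exact abs_le.mp hz
    obtain ⟨y, hy, hy2⟩ := isCompact_Icc.ultrafilter_le_nhds (U.map f) hM'
    rw [Ultrafilter.coe_map] at hy2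
    have hy2' : Filter.Tendsto f U (𝓝 y) := hy2
    have ht : Filter.Tendsto (fun z => (z, f z)) (↑U) (𝓝 (x, y)) :=
      Filter.Tendsto.prodMk_nhds hU hy2'
    have hxy : (x, y) ∈ {p : X × ℝ | p.2 = f p.1} :=
      hf.mem_of_tendsto ht (Filter.Eventually.of_forall fun z => rfl)
    have hyx : y = f x := hxy
    subst hyx
    exact ⟨hy2', abs_le.mpr hy⟩
  have hAclosed : ∀ n : ℕ, IsClosed (A n) := by
    intro n
    refine isClosed_of_closure_subset ?_
    intro x hx
    rw [mem_closure_iff_ultrafilter] at hx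
    obtain ⟨U, hAU, hU⟩ := hx
    exact (aux x U hU n hAU).2
  have hAcover : (⋃ n : ℕ, A n) = Set.univ := by
    ext x
    simp only [Set.mem_iUnion, Set.mem_univ, iff_true]
    exact ⟨⌈|f x|⌉₊, by simpa [hA] using Nat.le_ceil |f x|⟩
  have hEq : {x : X | ContinuousAt f x} = ⋃ n : ℕ, interior (A n) := by
    ext x
    simp only [Set.mem_setOf_eq, Set.mem_iUnion]
    constructor
    · intro hx
      refine ⟨⌈|f x| + 1⌉₊, ?_⟩
      rw [mem_interior_iff_mem_nhds]
      have h1 : ∀ᶠ y in 𝓝 x, dist (f y) (f x) < 1 :=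
        hx (Metric.ball_mem_nhds (f x) one_pos)
      filter_upwards [h1] with y hy
      have : |f y| ≤ |f x| + 1 := by
        have := abs_sub_abs_le_abs_sub (f y) (f x)
        rw [Real.dist_eq] at hy
        linarith
      exact this.trans (Nat.le_ceil _)
    · rintro ⟨n, hn⟩
      rw [mem_interior_iff_mem_nhds] at hn
      rw [ContinuousAt, Filter.tendsto_iff_ultrafilter]
      intro U hU
      exact (aux x U hU n (hU hn)).1
  rw [hEq]
  refine ⟨isOpen_iUnion fun n => isOpen_interior, ?_⟩
  exact dense_iUnion_interior_of_closed hAclosed hAcover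
end

section
/- Let f : ℝ → ℝ be a returning function with closed graph whose set C(f) of continuity points is not all of ℝ, and let C be a connected component of C(f). Then the restriction of f to the closure of C in ℝ is continuous. -/
/-!
A function with closed graph is continuous along any set on which it stays in a compact set, so
it suffices to bound `f` on one side of an endpoint `b` of an interval `(u, b)` of continuity.
Fix `L > |f b|` above the returning constant `M` of `b`. Points where `|f| = L` cannot accumulate
at `b` (closed graph), so by the intermediate value theorem `|f| - L` has constant sign on some
`(c, b)`. If it is negative, `f` is bounded there. If it is positive, let `y` be the last point
before `c` with `|f y| ≤ L`; returning at `b`, applied to `[y, b]`, gives `z ∈ (y, b)` with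
`|f z| ≤ max M |f y| ≤ L`, which is impossible.
-/

open Set Filter Topology

section ClosedGraph

variable {X Y : Type*} [TopologicalSpace X] [TopologicalSpace Y] {f : X → Y}

theorem tendsto_of_isClosed_graph (hgr : IsClosed {p : X × Y | p.2 = f p.1}) {l : Filter X}
    {b : X} (hl : l ≤ 𝓝 b) {K : Set Y} (hK : IsCompact K) (hfK : ∀ᶠ t in l, f t ∈ K) :
    Tendsto f l (𝓝 (f b)) := by
  refine hK.tendsto_nhds_of_unique_mapClusterPt hfK fun y _ hy => ?_
  suffices (b, y) ∈ closure {p : X × Y | p.2 = f p.1} by rwa [hgr.closure_eq] at this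
  rw [mem_closure_iff_nhds_basis ((𝓝 b).basis_sets.prod_nhds (𝓝 y).basis_sets)]
  rintro ⟨U, V⟩ ⟨hU, hV⟩
  obtain ⟨t, htU, htV⟩ := ((mapClusterPt_iff_frequently.1 hy V hV).and_eventually (hl hU)).exists
  exact ⟨(t, f t), rfl, htV, htU⟩

theorem eventually_notMem_of_isClosed_graph (hgr : IsClosed {p : X × Y | p.2 = f p.1}) {b : X}
    {K : Set Y} (hK : IsCompact K) (hKc : IsClosed K) (hb : f b ∉ K) :
    ∀ᶠ t in 𝓝 b, f t ∉ K := by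
  by_contra h
  simp only [not_eventually, not_not] at h
  have := frequently_iff_neBot.1 h
  have hK' : ∀ᶠ t in 𝓝 b ⊓ 𝓟 {t | f t ∈ K}, f t ∈ K := mem_inf_of_right (mem_principal_self _)
  exact hb (hKc.mem_of_tendsto (tendsto_of_isClosed_graph hgr inf_le_left hK hK') hK')

theorem isClosed_graph_comp (hgr : IsClosed {p : X × Y | p.2 = f p.1}) {Z : Type*}
    [TopologicalSpace Z] {g : Z → X} (hg : Continuous g) :
    IsClosed {p : Z × Y | p.2 = f (g p.1)} :=
  hgr.preimage ((hg.comp continuous_fst).prodMk continuous_snd)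

end ClosedGraph

theorem Returning.comp_homeomorph {X Y : Type*} [TopologicalSpace X] [TopologicalSpace Y]
    {f : X → ℝ} (hf : Returning f) (e : Y ≃ₜ X) : Returning (f ∘ e) := by
  intro y
  obtain ⟨M, hM, hret⟩ := hf (e y)
  refine ⟨M, hM, fun C hC hyC w hw => ?_⟩
  obtain ⟨_, ⟨⟨z, hzC, rfl⟩, hz⟩, hzM⟩ := hret (e '' C) (hC.image e.continuous)
    (mem_image_of_mem e hyC) (e w) ⟨mem_image_of_mem e hw.1, e.injective.ne hw.2⟩
  simp only [mem_insert_iff, mem_singleton_iff, e.injective.eq_iff] at hz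
  exact ⟨z, ⟨hzC, hz⟩, hzM⟩

theorem Returning.exists_abs_le_of_lt {f : ℝ → ℝ} (hf : Returning f) (b : ℝ) :
    ∃ M, ∀ y < b, ∃ z ∈ Ioo y b, |f z| ≤ max M |f y| := by
  obtain ⟨M, -, hret⟩ := hf b
  refine ⟨M, fun y hy => ?_⟩
  obtain ⟨z, ⟨hz, hzyb⟩, hzM⟩ := hret (Icc y b)
    ((convex_Icc y b).isPathConnected (nonempty_Icc.2 hy.le)) (right_mem_Icc.2 hy.le) y
    ⟨left_mem_Icc.2 hy.le, hy.ne⟩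
  simp only [mem_insert_iff, mem_singleton_iff, not_or] at hzyb
  exact ⟨z, ⟨hz.1.lt_of_ne' hzyb.2, hz.2.lt_of_ne hzyb.1⟩, hzM⟩

theorem IsPreconnected.forall_lt_or_forall_gt {X α : Type*} [TopologicalSpace X] [LinearOrder α]
    [TopologicalSpace α] [OrderClosedTopology α] {s : Set X} (hs : IsPreconnected s) {g : X → α}
    (hg : ContinuousOn g s) {L : α} (hL : ∀ t ∈ s, g t ≠ L) : (∀ t ∈ s, g t < L) ∨ (∀ t ∈ s, L < g t) := by
  by_contra! h
  obtain ⟨⟨t₁, ht₁, hLt₁⟩, ⟨t₂, ht₂, ht₂L⟩⟩ := h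
  obtain ⟨t, ht, htL⟩ := hs.intermediate_value ht₂ ht₁ hg ⟨ht₂L, hLt₁⟩
  exact hL t ht htL

theorem exists_last_le_of_forall_gt {α β : Type*} [ConditionallyCompleteLinearOrder α]
    [TopologicalSpace α] [OrderTopology α] [LinearOrder β] [TopologicalSpace β]
    [OrderClosedTopology β] {g : α → β} {a c b : α} {L : β} (hac : a ≤ c)
    (hg : ContinuousOn g (Icc a c)) (ha : g a ≤ L) (hgt : ∀ t ∈ Ioo c b, L < g t) :
    ∃ y ∈ Icc a c, g y ≤ L ∧ ∀ z ∈ Ioo y b, L < g z := by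
  set A := Icc a c ∩ g ⁻¹' Iic L
  have hA : IsCompact A :=
    isCompact_Icc.of_isClosed_subset (hg.preimage_isClosed_of_isClosed isClosed_Icc isClosed_Iic)
      inter_subset_left
  obtain ⟨y, ⟨hy, hyL⟩, hymax⟩ := hA.exists_isGreatest ⟨a, ⟨le_rfl, hac⟩, ha⟩
  refine ⟨y, hy, hyL, fun z hz => ?_⟩
  by_cases hzc : z ≤ c
  · exact lt_of_not_ge fun hzL => hz.1.not_ge (hymax ⟨⟨hy.1.trans hz.1.le, hzc⟩, hzL⟩)
  · exact hgt z ⟨lt_of_not_ge hzc, hz.2⟩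

namespace Set.OrdConnected

variable {α : Type*} [LinearOrder α] {C : Set α} {u b : α}

theorem subset_Iio (hC : OrdConnected C) (hu : u ∈ C) (hb : b ∉ C) (hub : u < b) :
    C ⊆ Iio b := fun _ ht =>
  lt_of_not_ge fun hbt => hb (hC.out hu ht ⟨hub.le, hbt⟩)

theorem subset_Ioi (hC : OrdConnected C) (hu : u ∈ C) (hb : b ∉ C) (hbu : b < u) :
    C ⊆ Ioi b := fun _ ht =>
  lt_of_not_ge fun htb => hb (hC.out ht hu ⟨htb, hbu.le⟩)

variable [TopologicalSpace α]

theorem Ioo_subset_of_mem_of_mem_closure [ClosedIicTopology α] (hC : OrdConnected C)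
    (hu : u ∈ C) (hb : b ∈ closure C) : Ioo u b ⊆ C := fun t ht =>
  let ⟨_, hvt, hv⟩ := mem_closure_iff.1 hb (Ioi t) isOpen_Ioi ht.2
  hC.out hu hv ⟨ht.1.le, le_of_lt hvt⟩

theorem Ioo_subset_of_mem_closure_of_mem [ClosedIciTopology α] (hC : OrdConnected C)
    (hb : b ∈ closure C) (hu : u ∈ C) : Ioo b u ⊆ C := fun t ht =>
  let ⟨_, hvt, hv⟩ := mem_closure_iff.1 hb (Iio t) isOpen_Iio ht.1
  hC.out hv hu ⟨le_of_lt hvt, ht.2.le⟩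

end Set.OrdConnected

section Endpoint

variable {f : ℝ → ℝ} {u b : ℝ}

theorem Returning.exists_eventually_abs_le_nhdsLT (hf : Returning f)
    (hgr : IsClosed {p : ℝ × ℝ | p.2 = f p.1}) (hub : u < b) (hcont : ContinuousOn f (Ioo u b)) :
    ∃ K, ∀ᶠ t in 𝓝[<] b, |f t| ≤ K := by
  obtain ⟨M, hM⟩ := hf.exists_abs_le_of_lt b
  obtain ⟨t₀, ht₀⟩ := nonempty_Ioo.2 hub
  obtain ⟨L, hML, ht₀L, hbL⟩ : ∃ L, M ≤ L ∧ |f t₀| ≤ L ∧ |f b| < L :=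
    ⟨max (max M |f t₀|) (|f b| + 1), le_max_of_le_left (le_max_left _ _),
      le_max_of_le_left (le_max_right _ _), lt_max_of_lt_right (lt_add_one _)⟩
  have hfbL : f b ∉ Metric.sphere 0 L := by
    simpa [Real.norm_eq_abs] using hbL.ne
  have hne : ∀ᶠ t in 𝓝[<] b, |f t| ≠ L := by
    filter_upwards [nhdsWithin_le_nhds
      (eventually_notMem_of_isClosed_graph hgr (isCompact_sphere 0 L) Metric.isClosed_sphere hfbL)]
      with t ht
    simpa [Real.norm_eq_abs] using ht
  obtain ⟨c, hc, hcne⟩ := (mem_nhdsLT_iff_exists_mem_Ico_Ioo_subset ht₀.2).1 hne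
  have hIcc : Icc t₀ c ⊆ Ioo u b := Icc_subset_Ioo ht₀.1 hc.2
  have hIoo : Ioo c b ⊆ Ioo u b := Ioo_subset_Ioo_left (ht₀.1.trans_le hc.1).le
  rcases isPreconnected_Ioo.forall_lt_or_forall_gt (hcont.mono hIoo).abs hcne with hlt | hgt
  · exact ⟨L, mem_of_superset (Ioo_mem_nhdsLT hc.2) fun t ht => (hlt t ht).le⟩
  · obtain ⟨y, hy, hyL, hyb⟩ := exists_last_le_of_forall_gt hc.1 (hcont.mono hIcc).abs ht₀L hgt
    obtain ⟨z, hz, hzM⟩ := hM y (hy.2.trans_lt hc.2)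
    linarith [hyb z hz, max_le hML hyL]

theorem Returning.continuousWithinAt_Iic (hf : Returning f)
    (hgr : IsClosed {p : ℝ × ℝ | p.2 = f p.1}) (hub : u < b) (hcont : ContinuousOn f (Ioo u b)) :
    ContinuousWithinAt f (Iic b) b := by
  obtain ⟨K, hK⟩ := hf.exists_eventually_abs_le_nhdsLT hgr hub hcont
  rw [← Iio_insert]
  refine ContinuousWithinAt.insert
    (tendsto_of_isClosed_graph hgr nhdsWithin_le_nhds (isCompact_closedBall 0 K) ?_)
  simpa [Real.norm_eq_abs] using hK

theorem Returning.continuousWithinAt_Ici (hf : Returning f)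
    (hgr : IsClosed {p : ℝ × ℝ | p.2 = f p.1}) (hbu : b < u) (hcont : ContinuousOn f (Ioo b u)) :
    ContinuousWithinAt f (Ici b) b := by
  have hneg := (hf.comp_homeomorph (Homeomorph.neg ℝ)).continuousWithinAt_Iic
    (isClosed_graph_comp hgr continuous_neg) (neg_lt_neg hbu)
    (hcont.comp continuous_neg.continuousOn fun t ht => ⟨lt_neg.1 ht.2, neg_lt.1 ht.1⟩)
  have hf_eq : (f ∘ Homeomorph.neg ℝ) ∘ Neg.neg = f := by ext; simp
  rw [← hf_eq]
  exact hneg.comp continuous_neg.continuousWithinAt fun _ ht => neg_le_neg (a := b) ht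

end Endpoint

theorem stmt_5_general (f : ℝ → ℝ) (hret : Returning f)
    (hgr : IsClosed {p : ℝ × ℝ | p.2 = f p.1})
    (x : ℝ) :
    ContinuousOn f (closure (connectedComponentIn {x : ℝ | ContinuousAt f x} x)) := by
  set C := connectedComponentIn {x : ℝ | ContinuousAt f x} x
  have hC : OrdConnected C := isPreconnected_connectedComponentIn.ordConnected
  have hCf : ∀ t ∈ C, ContinuousAt f t := fun t ht => connectedComponentIn_subset _ _ ht
  intro b hb
  by_cases hbC : b ∈ C
  · exact (hCf b hbC).continuousWithinAt
  obtain ⟨u, hu⟩ := closure_nonempty_iff.1 ⟨b, hb⟩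
  rcases (ne_of_mem_of_not_mem hu hbC).lt_or_gt with hub | hbu
  · refine (hret.continuousWithinAt_Iic hgr hub fun t ht => ?_).mono
      (closure_minimal ((hC.subset_Iio hu hbC hub).trans Iio_subset_Iic_self) isClosed_Iic)
    exact (hCf t (hC.Ioo_subset_of_mem_of_mem_closure hu hb ht)).continuousWithinAt
  · refine (hret.continuousWithinAt_Ici hgr hbu fun t ht => ?_).mono
      (closure_minimal ((hC.subset_Ioi hu hbC hbu).trans Ioi_subset_Ici_self) isClosed_Ici)
    exact (hCf t (hC.Ioo_subset_of_mem_closure_of_mem hb hu ht)).continuousWithinAt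

theorem stmt_5 (f : ℝ → ℝ) (hret : Returning f)
    (hgr : IsClosed {p : ℝ × ℝ | p.2 = f p.1})
    (hne : {x : ℝ | ContinuousAt f x} ≠ Set.univ)
    (x : ℝ) (hx : ContinuousAt f x) :
    ContinuousOn f (closure (connectedComponentIn {x : ℝ | ContinuousAt f x} x)) :=
  stmt_5_general f hret hgr x
end

section
/- Every first-countable, locally path-connected topological space is path-inductive. -/
/-- A topological space is *path-inductive* if a set is open iff its preimage under
every path (continuous map from the unit interval) is open. -/
def PathInductive (X : Type*) [TopologicalSpace X] : Prop :=
  ∀ U : Set X, IsOpen U ↔ ∀ γ : unitInterval → X, Continuous γ → IsOpen (γ ⁻¹' U)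

/-!
If `U` is not a neighbourhood of some `x ∈ U`, pick points `c n ∉ U` in a decreasing
path-connected neighbourhood basis `V n` of `x` and join `c n` to `c (n + 1)` inside `V n`.
Traversing these infinitely many paths on the intervals `[1/(n+2), 1/(n+1)]` and sending `0`
to `x` gives a path, continuous at `0` because the pieces shrink to `x`. Its preimage of `U`
contains `0` but none of the points `1/(n+1)`, so it is not open.
-/

open Set Filter Topology

theorem exists_antitone_basis_isPathConnected {X : Type*} [TopologicalSpace X]
    [FirstCountableTopology X] [LocallyPathConnectedSpace X] (x : X) :
    ∃ V : ℕ → Set X, (𝓝 x).HasAntitoneBasis V ∧ ∀ n, IsPathConnected (V n) :=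
  let ⟨V, hV, hbasis⟩ := (path_connected_basis x).exists_antitone_subbasis
  ⟨V, hbasis, fun n => (hV n).2⟩

theorem continuous_ite_nonpos_inv {X : Type*} [TopologicalSpace X] {x : X} {f : ℝ → X}
    (hf : Continuous f) (hx : Tendsto f atTop (𝓝 x)) :
    Continuous fun t : ℝ => if t ≤ 0 then x else f t⁻¹ := by
  refine continuous_iff_continuousAt.2 fun t => ?_
  rcases lt_trichotomy t 0 with ht | rfl | ht
  · refine (continuousAt_const (y := x)).congr ?_
    filter_upwards [Iio_mem_nhds ht] with s hs
    rw [if_pos hs.le]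
  · refine continuousAt_iff_continuous_left_right.2 ⟨?_, ?_⟩
    · exact continuousWithinAt_const.congr (fun s hs => if_pos hs) (if_pos le_rfl)
    · refine continuousWithinAt_Ioi_iff_Ici.1 ?_
      rw [ContinuousWithinAt, if_pos le_rfl]
      refine (hx.comp tendsto_inv_nhdsGT_zero).congr' ?_
      filter_upwards [self_mem_nhdsWithin] with s hs
      rw [Function.comp_apply, if_neg (not_le.2 hs)]
  · refine (hf.continuousAt.comp (continuousAt_inv₀ ht.ne')).congr ?_
    filter_upwards [Ioi_mem_nhds ht] with s hs
    rw [Function.comp_apply, if_neg (not_le.2 hs)]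

namespace Path

variable {X : Type*} [TopologicalSpace X] {c : ℕ → X}

/-- Traverses `q n` on `[n, n + 1]`; it is constant `c 0` on `(-∞, 0]`, where `⌊s⌋₊ = 0`. -/
noncomputable def seqConcat (q : ∀ n, Path (c n) (c (n + 1))) (s : ℝ) : X :=
  (q ⌊s⌋₊).extend (s - ⌊s⌋₊)

variable (q : ∀ n, Path (c n) (c (n + 1)))

theorem seqConcat_eq_of_mem_Icc (n : ℤ) {s : ℝ} (hs : s ∈ Icc (n : ℝ) (n + 1)) :
    seqConcat q s = (q n.toNat).extend (s - n.toNat) := by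
  rcases le_or_gt 0 n with hn | hn
  · obtain ⟨m, rfl⟩ := Int.eq_ofNat_of_zero_le hn
    simp only [Int.cast_natCast, Int.toNat_natCast] at hs ⊢
    rcases hs.2.lt_or_eq with hlt | rfl
    · rw [seqConcat, (Nat.floor_eq_iff ((Nat.cast_nonneg m).trans hs.1)).2 ⟨hs.1, hlt⟩]
    · rw [seqConcat, ← Nat.cast_succ, Nat.floor_natCast, sub_self, extend_zero, Nat.cast_succ,
        add_sub_cancel_left, extend_one]
  · have hs0 : s ≤ 0 := hs.2.trans (by exact_mod_cast hn)
    rw [seqConcat, Nat.floor_of_nonpos hs0, Int.toNat_of_nonpos hn.le]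

theorem continuous_seqConcat : Continuous (seqConcat q) := by
  refine (locallyFinite_Icc_of_tendsto (f := fun n : ℤ => (n : ℝ)) (g := fun n => (n : ℝ) + 1)
    tendsto_intCast_atTop_atTop ?_).continuous (iUnion_Icc_intCast ℝ) (fun _ => isClosed_Icc)
    fun n => ?_
  · exact tendsto_atBot_add_const_right _ 1 (tendsto_intCast_atBot_iff.2 tendsto_id)
  · exact (q n.toNat).continuous_extend.comp (continuous_sub_right _) |>.continuousOn.congr
      fun s hs => seqConcat_eq_of_mem_Icc q n hs

theorem seqConcat_natCast (n : ℕ) : seqConcat q n = c n := by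
  simp [seqConcat]

theorem tendsto_seqConcat_atTop {x : X}
    (hq : Tendsto (fun n => range (q n)) atTop (𝓝 x).smallSets) :
    Tendsto (seqConcat q) atTop (𝓝 x) :=
  (hq.comp tendsto_nat_floor_atTop).of_smallSets <| Eventually.of_forall fun s => by
    simp only [Function.comp_apply, ← extend_range]
    exact mem_range_self _

theorem exists_extend_one_div_eq {x : X}
    (hq : Tendsto (fun n => range (q n)) atTop (𝓝 x).smallSets) :
    ∃ γ : Path x (c 0), ∀ n : ℕ, γ.extend (1 / (n + 1)) = c n := by
  set f : ℝ → X := fun t => if t ≤ 0 then x else seqConcat q (t⁻¹ - 1)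
  have hf : Continuous f := continuous_ite_nonpos_inv
    ((continuous_seqConcat q).comp (continuous_sub_right 1))
    ((tendsto_seqConcat_atTop q hq).comp (tendsto_atTop_add_const_right _ (-1) tendsto_id))
  refine ⟨⟨⟨fun t => f t, hf.comp continuous_subtype_val⟩, by simp [f], ?_⟩, fun n => ?_⟩
  · simpa [f, if_neg (show ¬(1 : ℝ) ≤ 0 by norm_num)] using seqConcat_natCast q 0
  · have hmem : (1 / (n + 1) : ℝ) ∈ Icc 0 1 :=
      ⟨by positivity, div_le_one_of_le₀ (le_add_of_nonneg_left n.cast_nonneg) (by positivity)⟩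
    rw [extend_apply _ hmem]
    have hpos : ¬((n : ℝ) + 1 ≤ 0) := not_le.2 (by positivity)
    simpa [f, hpos] using seqConcat_natCast q n

end Path

theorem stmt_7 (X : Type*) [TopologicalSpace X]
    [FirstCountableTopology X] [LocallyPathConnectedSpace X] :
    PathInductive X := by
  refine fun U => ⟨fun hU γ hγ => hU.preimage hγ, fun h => ?_⟩
  refine isOpen_iff_mem_nhds.2 fun x hxU => ?_
  by_contra hx
  obtain ⟨V, hV, hVpc⟩ := exists_antitone_basis_isPathConnected x
  have hc (n : ℕ) : ∃ y ∈ V n, y ∉ U :=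
    not_subset.1 fun hVU => hx (mem_of_superset (hV.mem n) hVU)
  choose c hcV hcU using hc
  have hjoin (n : ℕ) : JoinedIn (V n) (c n) (c (n + 1)) :=
    (hVpc n).joinedIn _ (hcV n) _ (hV.antitone n.le_succ (hcV (n + 1)))
  obtain ⟨γ, hγ⟩ := Path.exists_extend_one_div_eq (fun n => (hjoin n).somePath) <|
    hV.tendsto_smallSets.smallSets_mono <| Eventually.of_forall fun n =>
      range_subset_iff.2 (hjoin n).somePath_mem
  have hopen : IsOpen (γ.extend ⁻¹' U) := (h γ γ.continuous).preimage continuous_projIcc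
  obtain ⟨n, hn⟩ := (tendsto_one_div_add_atTop_nhds_zero_nat.eventually
    (hopen.mem_nhds (by simpa using hxU))).exists
  exact hcU n (hγ n ▸ hn)
end

section
/- A Świątkowski function f : ℝ → ℝ is continuous if and only if it has closed graph. -/
/-- A function `f : X → ℝ` is *Świątkowski* if for every connected `C ⊆ X` and
`a, b ∈ C` with `f a < f b` there is a continuity point `x ∈ C` of `f` with
`f a < f x < f b`. -/
def Swiatkowski {X : Type*} [TopologicalSpace X] (f : X → ℝ) : Prop :=
  ∀ C : Set X, IsPreconnected C → ∀ a ∈ C, ∀ b ∈ C, f a < f b →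
    ∃ x ∈ C, ContinuousAt f x ∧ f a < f x ∧ f x < f b

/-- A Świątkowski function with closed graph has the intermediate value property. -/
lemma swiatkowski_darboux (f : ℝ → ℝ) (hf : Swiatkowski f)
    (hG : IsClosed {p : ℝ × ℝ | p.2 = f p.1}) (a b γ : ℝ)
    (h1 : f a < γ) (h2 : γ < f b) : ∃ z ∈ Set.uIcc a b, f z = γ := by
  by_contra hno
  push_neg at hno
  set G := {p : ℝ × ℝ | p.2 = f p.1} with hGdef
  set W := {c : ℝ | ∃ t, t ∈ Set.uIcc a b ∧ f t = c ∧ f a ≤ c ∧ c < γ ∧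
      (t = a ∨ ContinuousAt f t)} with hWdef
  have hWne : W.Nonempty := ⟨f a, a, Set.left_mem_uIcc, rfl, le_refl _, h1, Or.inl rfl⟩
  have hWbdd : BddAbove W := by
    refine ⟨γ, fun c hc => ?_⟩
    obtain ⟨t, -, -, -, hlt, -⟩ := hc
    exact hlt.le
  -- the compact piece of the graph over `uIcc a b × Icc (f a) γ`
  have hKc : IsCompact ((Set.uIcc a b ×ˢ Set.Icc (f a) γ) ∩ G) :=
    (isCompact_uIcc.prod isCompact_Icc).inter_right hG
  have himg : IsCompact (Prod.snd '' ((Set.uIcc a b ×ˢ Set.Icc (f a) γ) ∩ G)) :=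
    hKc.image continuous_snd
  have hWsub : W ⊆ Prod.snd '' ((Set.uIcc a b ×ˢ Set.Icc (f a) γ) ∩ G) := by
    rintro c ⟨t, ht, hft, hac, hcγ, -⟩
    exact ⟨(t, c), ⟨⟨ht, hac, hcγ.le⟩, hft.symm⟩, rfl⟩
  set V := sSup W with hVdef
  have hVmem : V ∈ Prod.snd '' ((Set.uIcc a b ×ˢ Set.Icc (f a) γ) ∩ G) :=
    closure_minimal hWsub himg.isClosed (csSup_mem_closure hWne hWbdd)
  obtain ⟨p, ⟨⟨hp1, hp2⟩, hpG⟩, hpV⟩ := hVmem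
  -- p.1 is a point of uIcc a b with f p.1 = V
  have hfp : f p.1 = V := by rw [← hpV]; exact hpG.symm
  have hVa : f a ≤ V := le_csSup hWbdd ⟨a, Set.left_mem_uIcc, rfl, le_refl _, h1, Or.inl rfl⟩
  have hVγ : V < γ := lt_of_le_of_ne (hpV ▸ hp2.2) (fun h => hno p.1 hp1 (hfp.trans h))
  -- minimize f over the part of the graph on `uIcc p.1 b` with values in `[γ, f b]`
  have hMc : IsCompact ((Set.uIcc p.1 b ×ˢ Set.Icc γ (f b)) ∩ G) :=
    (isCompact_uIcc.prod isCompact_Icc).inter_right hG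
  have hbM : (b, f b) ∈ (Set.uIcc p.1 b ×ˢ Set.Icc γ (f b)) ∩ G :=
    ⟨⟨Set.right_mem_uIcc, h2.le, le_refl _⟩, rfl⟩
  obtain ⟨q, hqM, hqmin⟩ := hMc.exists_isMinOn ⟨_, hbM⟩ continuous_snd.continuousOn
  have hqmin' : ∀ r ∈ (Set.uIcc p.1 b ×ˢ Set.Icc γ (f b)) ∩ G, q.2 ≤ r.2 :=
    fun r hr => isMinOn_iff.mp hqmin r hr
  have hfq : f q.1 = q.2 := hqM.2.symm
  have hq1ab : q.1 ∈ Set.uIcc a b := Set.uIcc_subset_uIcc hp1 Set.right_mem_uIcc hqM.1.1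
  have hγμ : γ < q.2 := lt_of_le_of_ne hqM.1.2.1 (fun h => hno q.1 hq1ab (hfq.trans h.symm))
  have hμb : q.2 ≤ f b := hqM.1.2.2
  -- apply the Świątkowski property between p.1 and q.1
  obtain ⟨y, hy, hyc, hy1, hy2⟩ := hf (Set.uIcc p.1 q.1) isPreconnected_uIcc
    p.1 Set.left_mem_uIcc q.1 Set.right_mem_uIcc
    (by rw [hfp, hfq]; exact hVγ.trans hγμ)
  rw [hfp] at hy1
  rw [hfq] at hy2
  have hyab : y ∈ Set.uIcc a b := Set.uIcc_subset_uIcc hp1 hq1ab hy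
  rcases le_or_gt γ (f y) with hge | hlt
  · -- then (y, f y) is in M with smaller second coordinate : contradiction
    have hyM : (y, f y) ∈ (Set.uIcc p.1 b ×ˢ Set.Icc γ (f b)) ∩ G := by
      refine ⟨⟨Set.uIcc_subset_uIcc Set.left_mem_uIcc hqM.1.1 hy, hge, ?_⟩, rfl⟩
      exact hy2.le.trans hμb
    exact absurd (hqmin' _ hyM) (not_le.mpr hy2)
  · -- then f y ∈ W with f y > V : contradiction
    have : f y ≤ V := le_csSup hWbdd ⟨y, hyab, rfl, hVa.trans hy1.le, hlt, Or.inr hyc⟩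
    exact absurd this (not_le.mpr hy1)

theorem stmt_10 (f : ℝ → ℝ) (hf : Swiatkowski f) :
    Continuous f ↔ IsClosed {p : ℝ × ℝ | p.2 = f p.1} := by
  constructor
  · intro hc
    exact isClosed_eq continuous_snd (hc.comp continuous_fst)
  · intro hG
    rw [continuous_iff_continuousAt]
    intro x₀
    by_contra hcont
    rw [Metric.continuousAt_iff] at hcont
    push_neg at hcont
    obtain ⟨ε, hε, hx⟩ := hcont
    have key : ∀ δ > 0, ∃ z, |z - x₀| ≤ δ ∧ (f z = f x₀ + ε/2 ∨ f z = f x₀ - ε/2) := by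
      intro δ hδ
      obtain ⟨x, hx1, hx2⟩ := hx δ hδ
      rw [Real.dist_eq] at hx1 hx2
      have habs : ∀ z ∈ Set.uIcc x₀ x, |z - x₀| ≤ δ := by
        intro z hz
        rcases le_total x₀ x with hle | hle
        · rw [Set.uIcc_of_le hle] at hz
          rw [abs_of_nonneg (by linarith [hz.1])]
          have := abs_nonneg (x - x₀)
          linarith [hz.2, le_abs_self (x - x₀)]
        · rw [Set.uIcc_of_ge hle] at hz
          rw [abs_of_nonpos (by linarith [hz.2])]
          linarith [hz.1, neg_le_abs (x - x₀)]
      rcases le_total (f x₀) (f x) with h | h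
      · have hfx : f x₀ + ε/2 < f x := by
          rw [abs_of_nonneg (by linarith)] at hx2; linarith
        obtain ⟨z, hz, hfz⟩ := swiatkowski_darboux f hf hG x₀ x (f x₀ + ε/2)
          (by linarith) hfx
        exact ⟨z, habs z hz, Or.inl hfz⟩
      · have hfx : f x < f x₀ - ε/2 := by
          rw [abs_of_nonpos (by linarith)] at hx2; linarith
        obtain ⟨z, hz, hfz⟩ := swiatkowski_darboux f hf hG x x₀ (f x₀ - ε/2)
          hfx (by linarith)
        refine ⟨z, ?_, Or.inr hfz⟩
        rw [Set.uIcc_comm] at hz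
        exact habs z hz
    have hclosure : ∀ γ' : ℝ, (∀ δ > 0, ∃ z, |z - x₀| ≤ δ ∧ f z = γ') → γ' = f x₀ := by
      intro γ' h
      have hmem : (x₀, γ') ∈ closure {p : ℝ × ℝ | p.2 = f p.1} := by
        rw [Metric.mem_closure_iff]
        intro r hr
        obtain ⟨z, hz1, hz2⟩ := h (r/2) (by linarith)
        refine ⟨(z, γ'), by simp [hz2], ?_⟩
        rw [Prod.dist_eq]
        simp only [Real.dist_eq]
        have : |x₀ - z| = |z - x₀| := abs_sub_comm _ _
        rw [this]
        simp only [sub_self, abs_zero]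
        rw [max_eq_left (abs_nonneg _)]
        linarith
      rw [hG.closure_eq] at hmem
      exact hmem
    by_cases hplus : ∀ δ > 0, ∃ z, |z - x₀| ≤ δ ∧ f z = f x₀ + ε/2
    · have := hclosure _ hplus; linarith
    · push_neg at hplus
      obtain ⟨δ₀, hδ₀, hnoz⟩ := hplus
      have hminus : ∀ δ > 0, ∃ z, |z - x₀| ≤ δ ∧ f z = f x₀ - ε/2 := by
        intro δ hδ
        obtain ⟨z, hz1, hz2⟩ := key (min δ δ₀) (lt_min hδ hδ₀)
        rcases hz2 with h | h
        · exact absurd h (hnoz z (hz1.trans (min_le_right _ _)))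
        · exact ⟨z, hz1.trans (min_le_left _ _), h⟩
      have := hclosure _ hminus; linarith
end

section
/- A weakly Świątkowski function f : ℝ → ℝ is continuous if and only if it has closed graph. -/
open Set

/-- A function `f : X → ℝ` is *weakly Świątkowski* if for every connected `C ⊆ X` and
`a, b ∈ C` with `f a < f b` there is a point `x ∈ C` with `f a < f x < f b`. -/
def WeaklySwiatkowski {X : Type*} [TopologicalSpace X] (f : X → ℝ) : Prop :=
  ∀ C : Set X, IsPreconnected C → ∀ a ∈ C, ∀ b ∈ C, f a < f b →
    ∃ x ∈ C, f a < f x ∧ f x < f b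

/-- attainment of extremal values of a closed-graph function in a compact band -/
lemma attain_aux (f : ℝ → ℝ) (hg : IsClosed {p : ℝ × ℝ | p.2 = f p.1})
    (u v lo hi : ℝ) (hne : ∃ x ∈ Icc u v, f x ∈ Icc lo hi) :
    (∃ z ∈ Icc u v, f z ∈ Icc lo hi ∧ ∀ x ∈ Icc u v, f x ∈ Icc lo hi → f z ≤ f x) ∧
    (∃ z ∈ Icc u v, f z ∈ Icc lo hi ∧ ∀ x ∈ Icc u v, f x ∈ Icc lo hi → f x ≤ f z) := by
  set K : Set (ℝ × ℝ) := (Icc u v ×ˢ Icc lo hi) ∩ {p : ℝ × ℝ | p.2 = f p.1} with hK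
  have hKc : IsCompact K := (isCompact_Icc.prod isCompact_Icc).inter_right hg
  set V : Set ℝ := Prod.snd '' K with hV
  have hVc : IsCompact V := hKc.image continuous_snd
  obtain ⟨x, hx, hfx⟩ := hne
  have hxK : ((x, f x) : ℝ × ℝ) ∈ K := ⟨⟨hx, hfx⟩, rfl⟩
  have hVne : V.Nonempty := ⟨f x, (x, f x), hxK, rfl⟩
  have hmem : ∀ y ∈ Icc u v, f y ∈ Icc lo hi → f y ∈ V :=
    fun y hy hfy => ⟨(y, f y), ⟨⟨hy, hfy⟩, rfl⟩, rfl⟩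
  constructor
  · have h1 : sInf V ∈ V := hVc.sInf_mem hVne
    obtain ⟨⟨z, w⟩, ⟨⟨hz1, hz2⟩, hz3⟩, hz4⟩ := h1
    simp only [mem_setOf_eq] at hz3
    subst hz3
    simp only at hz1 hz2 hz4
    refine ⟨z, hz1, hz2, ?_⟩
    intro y hy hfy
    rw [hz4]
    exact csInf_le hVc.bddBelow (hmem y hy hfy)
  · have h1 : sSup V ∈ V := hVc.sSup_mem hVne
    obtain ⟨⟨z, w⟩, ⟨⟨hz1, hz2⟩, hz3⟩, hz4⟩ := h1
    simp only [mem_setOf_eq] at hz3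
    subst hz3
    simp only at hz1 hz2 hz4
    refine ⟨z, hz1, hz2, ?_⟩
    intro y hy hfy
    rw [hz4]
    exact le_csSup hVc.bddAbove (hmem y hy hfy)

/-- closed graph + weakly Świątkowski implies exact intermediate value property on Icc -/
lemma key_ivt (f : ℝ → ℝ) (hf : WeaklySwiatkowski f)
    (hg : IsClosed {p : ℝ × ℝ | p.2 = f p.1}) (u v a b L : ℝ)
    (ha : a ∈ Icc u v) (hb : b ∈ Icc u v) (h1 : f a < L) (h2 : L < f b) :
    ∃ x ∈ Icc u v, f x = L := by
  -- minimum of values ≥ L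
  obtain ⟨⟨z, hz, hzv, hzmin⟩, -⟩ :=
    attain_aux f hg u v L (f b) ⟨b, hb, ⟨le_of_lt h2, le_refl _⟩⟩
  rcases eq_or_lt_of_le hzv.1 with hm | hm
  · exact ⟨z, hz, hm.symm⟩
  -- hm : L < f z
  have hzmin' : ∀ x ∈ Icc u v, L ≤ f x → f z ≤ f x := by
    intro x hx hLx
    by_contra hcon
    push_neg at hcon
    exact absurd (hzmin x hx ⟨hLx, le_trans hcon.le hzv.2⟩) (by linarith)
  obtain ⟨w, hw, hw1, hw2⟩ := hf (Icc u v) isPreconnected_Icc a ha z hz (h1.trans hm)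
  have hwL : f w < L := by
    by_contra hcon
    push_neg at hcon
    exact absurd (hzmin' w hw hcon) (by linarith)
  -- maximum of values in [f w, L]
  obtain ⟨-, ⟨y, hy, hyv, hymax⟩⟩ :=
    attain_aux f hg u v (f w) L ⟨w, hw, ⟨le_refl _, hwL.le⟩⟩
  rcases eq_or_lt_of_le hyv.2 with hs | hs
  · exact ⟨y, hy, hs⟩
  -- hs : f y < L
  obtain ⟨w', hw', hw'1, hw'2⟩ := hf (Icc u v) isPreconnected_Icc y hy z hz (hs.trans hm)
  have hw'L : f w' < L := by
    by_contra hcon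
    push_neg at hcon
    exact absurd (hzmin' w' hw' hcon) (by linarith)
  exact absurd (hymax w' hw' ⟨le_trans hyv.1 hw'1.le, hw'L.le⟩) (by linarith)

theorem stmt_11 (f : ℝ → ℝ) (hf : WeaklySwiatkowski f) :
    Continuous f ↔ IsClosed {p : ℝ × ℝ | p.2 = f p.1} := by
  constructor
  · intro h
    exact isClosed_eq continuous_snd (h.comp continuous_fst)
  · intro hg
    rw [continuous_iff_continuousAt]
    intro x₀
    by_contra hc
    rw [Metric.continuousAt_iff] at hc
    push_neg at hc
    obtain ⟨ε, hε, H⟩ := hc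
    have hopen : IsOpen ({p : ℝ × ℝ | p.2 = f p.1}ᶜ) := hg.isOpen_compl
    -- ball around (x₀, f x₀ + ε/2) avoiding the graph
    have hp1 : ((x₀, f x₀ + ε / 2) : ℝ × ℝ) ∈ ({p : ℝ × ℝ | p.2 = f p.1}ᶜ) := by
      simp only [mem_compl_iff, mem_setOf_eq]
      intro h; linarith
    obtain ⟨δ₁, hδ₁, hball₁⟩ := Metric.isOpen_iff.mp hopen _ hp1
    have hp2 : ((x₀, f x₀ - ε / 2) : ℝ × ℝ) ∈ ({p : ℝ × ℝ | p.2 = f p.1}ᶜ) := by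
      simp only [mem_compl_iff, mem_setOf_eq]
      intro h; linarith
    obtain ⟨δ₂, hδ₂, hball₂⟩ := Metric.isOpen_iff.mp hopen _ hp2
    obtain ⟨x, hx, hfx⟩ := H (min δ₁ δ₂) (lt_min hδ₁ hδ₂)
    -- bound on |w - x₀| for w in the interval between x₀ and x
    have hdist : ∀ w ∈ Icc (min x₀ x) (max x₀ x), dist w x₀ < min δ₁ δ₂ := by
      intro w hwmem
      have h1 : dist w x₀ ≤ max x₀ x - min x₀ x :=
        Real.dist_le_of_mem_Icc hwmem ⟨min_le_left _ _, le_max_left _ _⟩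
      have h2 : max x₀ x - min x₀ x = |x - x₀| := max_sub_min_eq_abs x₀ x
      have h3 : dist x x₀ = |x - x₀| := Real.dist_eq x x₀
      calc dist w x₀ ≤ |x - x₀| := by rw [← h2]; exact h1
        _ = dist x x₀ := h3.symm
        _ < min δ₁ δ₂ := hx
    have hx₀mem : x₀ ∈ Icc (min x₀ x) (max x₀ x) := ⟨min_le_left _ _, le_max_left _ _⟩
    have hxmem : x ∈ Icc (min x₀ x) (max x₀ x) := ⟨min_le_right _ _, le_max_right _ _⟩
    rw [Real.dist_eq, le_abs] at hfx
    rcases hfx with hcase | hcase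
    · -- f x ≥ f x₀ + ε : use level f x₀ + ε/2
      obtain ⟨w, hw, hwval⟩ := key_ivt f hf hg (min x₀ x) (max x₀ x) x₀ x (f x₀ + ε / 2)
        hx₀mem hxmem (by linarith) (by linarith)
      have hmem : ((w, f w) : ℝ × ℝ) ∈ Metric.ball ((x₀, f x₀ + ε / 2) : ℝ × ℝ) δ₁ := by
        rw [Metric.mem_ball, Prod.dist_eq]
        apply max_lt
        · exact lt_of_lt_of_le (hdist w hw) (min_le_left _ _)
        · rw [hwval, dist_self]; exact hδ₁
      exact hball₁ hmem rfl
    · -- f x ≤ f x₀ - ε : use level f x₀ - ε/2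
      obtain ⟨w, hw, hwval⟩ := key_ivt f hf hg (min x₀ x) (max x₀ x) x x₀ (f x₀ - ε / 2)
        hxmem hx₀mem (by linarith) (by linarith)
      have hmem : ((w, f w) : ℝ × ℝ) ∈ Metric.ball ((x₀, f x₀ - ε / 2) : ℝ × ℝ) δ₂ := by
        rw [Metric.mem_ball, Prod.dist_eq]
        apply max_lt
        · exact lt_of_lt_of_le (hdist w hw) (min_le_right _ _)
        · rw [hwval, dist_self]; exact hδ₂
      exact hball₂ hmem rfl
end

section
/- Every B-quasicontinuous function f : X → ℝ on a topological space X is weakly Gibson. -/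
/-- `f : X → ℝ` is *B-quasicontinuous* if for every `x`, every neighborhood `V` of
`f x` and every open connected `O ⊆ X` with `x ∈ cl O` there is a nonempty open
`G ⊆ O` with `f G ⊆ V`. -/
def BQuasicontinuous {X : Type*} [TopologicalSpace X] (f : X → ℝ) : Prop :=
  ∀ x : X, ∀ V ∈ nhds (f x), ∀ O : Set X, IsOpen O → IsConnected O → x ∈ closure O →
    ∃ G : Set X, IsOpen G ∧ G.Nonempty ∧ G ⊆ O ∧ f '' G ⊆ V

/-- `f : X → ℝ` is *weakly Gibson* if `f (cl O) ⊆ cl (f O)` for every open connected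
`O ⊆ X`. -/
def WeaklyGibson {X : Type*} [TopologicalSpace X] (f : X → ℝ) : Prop :=
  ∀ O : Set X, IsOpen O → IsConnected O → f '' closure O ⊆ closure (f '' O)

theorem stmt_17 {X : Type*} [TopologicalSpace X] (f : X → ℝ)
    (hf : BQuasicontinuous f) : WeaklyGibson f := by
  intro O hO hOc y hy
  obtain ⟨x, hx, rfl⟩ := hy
  rw [mem_closure_iff_nhds]
  intro V hV
  obtain ⟨G, hGo, ⟨g, hg⟩, hGO, hGV⟩ := hf x V hV O hO hOc hx
  exact ⟨f g, hGV ⟨g, hg, rfl⟩, ⟨g, hGO hg, rfl⟩⟩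
end

section
/- Every peripherally continuous function f : ℝ → ℝ with closed graph is continuous. -/
open Set Metric


/-- `f : X → ℝ` is *peripherally continuous* if for every `x`, every neighborhood `O`
of `x` and every neighborhood `W` of `f x` there is a neighborhood `V ⊆ O` of `x` with
`f (∂V) ⊆ W`. -/
def PeriphContinuous {X : Type*} [TopologicalSpace X] (f : X → ℝ) : Prop :=
  ∀ x : X, ∀ O ∈ nhds x, ∀ W ∈ nhds (f x),
    ∃ V ∈ nhds x, V ⊆ O ∧ f '' frontier V ⊆ W

/-- Preimage of a compact set under a closed-graph function is closed. -/
lemma closedGraph_preimage_compact {f : ℝ → ℝ}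
    (hgr : IsClosed {p : ℝ × ℝ | p.2 = f p.1})
    {K : Set ℝ} (hK : IsCompact K) : IsClosed (f ⁻¹' K) := by
  have : CompactSpace K := isCompact_iff_compactSpace.mp hK
  have hc : IsClosed {p : ℝ × K | (p.2 : ℝ) = f p.1} := by
    have hcont : Continuous (fun p : ℝ × K => ((p.1, (p.2 : ℝ)) : ℝ × ℝ)) := by
      fun_prop
    exact hgr.preimage hcont
  have himg : Prod.fst '' {p : ℝ × K | (p.2 : ℝ) = f p.1} = f ⁻¹' K := by
    ext x
    constructor
    · rintro ⟨⟨a, b⟩, hb, rfl⟩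
      simp only [mem_setOf_eq] at hb
      simp only [Set.mem_preimage, ← hb]
      exact b.2
    · intro hx
      exact ⟨(x, ⟨f x, hx⟩), rfl, rfl⟩
  rw [← himg]
  exact isClosedMap_fst_of_compactSpace _ hc

/-- A peripherally continuous function clusters to `f p` from the left of `p`. -/
lemma left_cluster {f : ℝ → ℝ} (hf : PeriphContinuous f) (p : ℝ) {δ γ : ℝ}
    (hδ : 0 < δ) (hγ : 0 < γ) : ∃ s, p - δ < s ∧ s < p ∧ |f s - f p| < γ := by
  obtain ⟨V, hV, hVO, hVf⟩ := hf p (Metric.ball p (δ/2)) (Metric.ball_mem_nhds p (by linarith))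
      (Metric.ball (f p) γ) (Metric.ball_mem_nhds _ hγ)
  set S := {t : ℝ | t ≤ p ∧ Icc t p ⊆ V} with hS
  have hpS : p ∈ S := by
    refine ⟨le_refl _, ?_⟩
    rw [Icc_self]
    simpa using mem_of_mem_nhds hV
  have hbdd : BddBelow S := by
    refine ⟨p - δ/2, fun t ht => ?_⟩
    have := hVO (ht.2 ⟨le_refl _, ht.1⟩)
    rw [Metric.mem_ball, Real.dist_eq] at this
    cases abs_lt.mp this with
    | intro h1 h2 => linarith
  set a := sInf S with ha
  obtain ⟨η, hη, hball⟩ := Metric.mem_nhds_iff.mp hV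
  have hmem : p - η/2 ∈ S := by
    refine ⟨by linarith, fun y hy => hball ?_⟩
    rw [Metric.mem_ball, Real.dist_eq, abs_lt]
    cases hy with
    | intro h1 h2 => constructor <;> linarith
  have hap : a < p := lt_of_le_of_lt (csInf_le hbdd hmem) (by linarith)
  have hacl : a ∈ closure V := by
    rw [Metric.mem_closure_iff]
    intro ζ hζ
    obtain ⟨t, htS, htlt⟩ := exists_lt_of_csInf_lt ⟨p, hpS⟩ (show sInf S < a + ζ by linarith)
    refine ⟨t, htS.2 ⟨le_refl _, htS.1⟩, ?_⟩
    rw [Real.dist_eq, abs_lt]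
    have : a ≤ t := csInf_le hbdd htS
    constructor <;> linarith
  have hani : a ∉ interior V := by
    intro hint
    rw [mem_interior_iff_mem_nhds, Metric.mem_nhds_iff] at hint
    obtain ⟨η₂, hη₂, hball₂⟩ := hint
    obtain ⟨t, htS, htlt⟩ := exists_lt_of_csInf_lt ⟨p, hpS⟩
      (show sInf S < a + η₂/2 by linarith)
    have hat : a ≤ t := csInf_le hbdd htS
    have : a - η₂/2 ∈ S := by
      refine ⟨by linarith [htS.1], fun y hy => ?_⟩
      rcases le_or_gt y t with h | h
      · apply hball₂
        rw [Metric.mem_ball, Real.dist_eq, abs_lt]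
        cases hy with
        | intro h1 h2 => constructor <;> linarith
      · exact htS.2 ⟨h.le, hy.2⟩
    have := csInf_le hbdd this
    linarith
  have hafr : a ∈ frontier V := ⟨hacl, hani⟩
  have haO : a ∈ closure (Metric.ball p (δ/2)) := closure_mono hVO hacl
  have hdist : dist a p ≤ δ/2 := Metric.closure_ball_subset_closedBall haO
  have hfa := hVf ⟨a, hafr, rfl⟩
  rw [Metric.mem_ball, Real.dist_eq] at hfa
  rw [Real.dist_eq] at hdist
  have h1 : p - δ < a := by
    cases abs_le.mp hdist with
    | intro h1 h2 => linarith
  exact ⟨a, h1, hap, hfa⟩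

/-- A peripherally continuous function clusters to `f p` from the right of `p`. -/
lemma right_cluster {f : ℝ → ℝ} (hf : PeriphContinuous f) (p : ℝ) {δ γ : ℝ}
    (hδ : 0 < δ) (hγ : 0 < γ) : ∃ s, p < s ∧ s < p + δ ∧ |f s - f p| < γ := by
  obtain ⟨V, hV, hVO, hVf⟩ := hf p (Metric.ball p (δ/2)) (Metric.ball_mem_nhds p (by linarith))
      (Metric.ball (f p) γ) (Metric.ball_mem_nhds _ hγ)
  set S := {t : ℝ | p ≤ t ∧ Icc p t ⊆ V} with hS
  have hpS : p ∈ S := by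
    refine ⟨le_refl _, ?_⟩
    rw [Icc_self]
    simpa using mem_of_mem_nhds hV
  have hbdd : BddAbove S := by
    refine ⟨p + δ/2, fun t ht => ?_⟩
    have := hVO (ht.2 ⟨ht.1, le_refl _⟩)
    rw [Metric.mem_ball, Real.dist_eq] at this
    cases abs_lt.mp this with
    | intro h1 h2 => linarith
  set a := sSup S with ha
  obtain ⟨η, hη, hball⟩ := Metric.mem_nhds_iff.mp hV
  have hmem : p + η/2 ∈ S := by
    refine ⟨by linarith, fun y hy => hball ?_⟩
    rw [Metric.mem_ball, Real.dist_eq, abs_lt]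
    cases hy with
    | intro h1 h2 => constructor <;> linarith
  have hap : p < a := lt_of_lt_of_le (by linarith) (le_csSup hbdd hmem)
  have hacl : a ∈ closure V := by
    rw [Metric.mem_closure_iff]
    intro ζ hζ
    obtain ⟨t, htS, htlt⟩ := exists_lt_of_lt_csSup ⟨p, hpS⟩ (show a - ζ < sSup S by linarith)
    refine ⟨t, htS.2 ⟨htS.1, le_refl _⟩, ?_⟩
    rw [Real.dist_eq, abs_lt]
    have : t ≤ a := le_csSup hbdd htS
    constructor <;> linarith
  have hani : a ∉ interior V := by
    intro hint
    rw [mem_interior_iff_mem_nhds, Metric.mem_nhds_iff] at hint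
    obtain ⟨η₂, hη₂, hball₂⟩ := hint
    obtain ⟨t, htS, htlt⟩ := exists_lt_of_lt_csSup ⟨p, hpS⟩
      (show a - η₂/2 < sSup S by linarith)
    have hat : t ≤ a := le_csSup hbdd htS
    have : a + η₂/2 ∈ S := by
      refine ⟨by linarith [htS.1], fun y hy => ?_⟩
      rcases le_or_gt t y with h | h
      · apply hball₂
        rw [Metric.mem_ball, Real.dist_eq, abs_lt]
        cases hy with
        | intro h1 h2 => constructor <;> linarith
      · exact htS.2 ⟨hy.1, h.le⟩
    have := le_csSup hbdd this
    linarith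
  have hafr : a ∈ frontier V := ⟨hacl, hani⟩
  have haO : a ∈ closure (Metric.ball p (δ/2)) := closure_mono hVO hacl
  have hdist : dist a p ≤ δ/2 := Metric.closure_ball_subset_closedBall haO
  have hfa := hVf ⟨a, hafr, rfl⟩
  rw [Metric.mem_ball, Real.dist_eq] at hfa
  rw [Real.dist_eq] at hdist
  have h1 : a < p + δ := by
    cases abs_le.mp hdist with
    | intro h1 h2 => linarith
  exact ⟨a, hap, h1, hfa⟩

lemma right_side {f : ℝ → ℝ} (hf : PeriphContinuous f)
    (hgr : IsClosed {p : ℝ × ℝ | p.2 = f p.1}) (x : ℝ) {ε : ℝ} (hε : 0 < ε) :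
    ∃ δ > 0, ∀ y, x < y → y < x + δ → |f y - f x| ≤ ε := by
  by_contra h
  push_neg at h
  have H : ∀ δ > 0, ∃ u, x < u ∧ u < x + δ ∧ ε < |f u - f x| := by
    intro δ hδ
    obtain ⟨y, hy1, hy2, hy3⟩ := h δ hδ
    exact ⟨y, hy1, hy2, hy3⟩
  have hC : IsClosed (f ⁻¹' Metric.closedBall (f x) ε) :=
    closedGraph_preimage_compact hgr (isCompact_closedBall _ _)
  -- key claim
  have key : ∀ δ > 0, ∃ t, x < t ∧ t < x + δ ∧ |f t - f x| = ε := by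
    intro δ hδ
    obtain ⟨b, hb1, hb2, hb3⟩ := right_cluster hf x hδ hε
    obtain ⟨u, hu1, hu2, hu3⟩ := H (b - x) (by linarith)
    have hub : u < b := by linarith
    set T := f ⁻¹' Metric.closedBall (f x) ε ∩ Icc u b with hT
    have hTclosed : IsClosed T := hC.inter isClosed_Icc
    have hbT : b ∈ T := by
      refine ⟨?_, ⟨hub.le, le_refl _⟩⟩
      rw [Set.mem_preimage, Metric.mem_closedBall, Real.dist_eq]
      exact hb3.le
    have hTbdd : BddBelow T := ⟨u, fun t ht => ht.2.1⟩
    set t := sInf T with ht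
    have htT : t ∈ T := hTclosed.csInf_mem ⟨b, hbT⟩ hTbdd
    have hut : u ≤ t := le_csInf ⟨b, hbT⟩ (fun s hs => hs.2.1)
    have hunotC : u ∉ f ⁻¹' Metric.closedBall (f x) ε := by
      rw [Set.mem_preimage, Metric.mem_closedBall, Real.dist_eq]
      exact not_le.mpr hu3
    have hune : u ≠ t := fun h => hunotC (h ▸ htT.1)
    have hut' : u < t := lt_of_le_of_ne hut hune
    have hbig : ∀ s, u ≤ s → s < t → ε < |f s - f x| := by
      intro s hs1 hs2
      by_contra hcon
      push_neg at hcon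
      have : s ∈ T := by
        refine ⟨?_, ⟨hs1, by linarith [htT.2.2]⟩⟩
        rw [Set.mem_preimage, Metric.mem_closedBall, Real.dist_eq]
        exact hcon
      exact absurd (csInf_le hTbdd this) (not_le.mpr hs2)
    have hge : ε ≤ |f t - f x| := by
      by_contra hcon
      push_neg at hcon
      obtain ⟨s, hs1, hs2, hs3⟩ := left_cluster hf t (show (0:ℝ) < t - u by linarith)
        (show (0:ℝ) < ε - |f t - f x| by linarith)
      have h1 := hbig s (by linarith) hs2
      have h2 : |f s - f x| ≤ |f s - f t| + |f t - f x| := abs_sub_le _ _ _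
      linarith
    have hle : |f t - f x| ≤ ε := by
      have := htT.1
      rw [Set.mem_preimage, Metric.mem_closedBall, Real.dist_eq] at this
      exact this
    exact ⟨t, by linarith, by linarith [htT.2.2], le_antisymm hle hge⟩
  -- derive contradiction via closed graph
  have hC' : IsClosed (f ⁻¹' ({f x - ε, f x + ε} : Set ℝ)) :=
    closedGraph_preimage_compact hgr ((Set.finite_singleton _).insert _).isCompact
  have hxcl : x ∈ closure (f ⁻¹' ({f x - ε, f x + ε} : Set ℝ)) := by
    rw [Metric.mem_closure_iff]
    intro ζ hζ
    obtain ⟨t, ht1, ht2, ht3⟩ := key ζ hζ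
    refine ⟨t, ?_, ?_⟩
    · rcases abs_eq hε.le |>.mp ht3 with h | h
      · right; rw [Set.mem_singleton_iff]; linarith
      · left; show t ∈ f ⁻¹' {f x - ε}; rw [Set.mem_preimage, Set.mem_singleton_iff]; linarith
    · rw [Real.dist_eq, abs_lt]; constructor <;> linarith
  rw [hC'.closure_eq] at hxcl
  simp only [Set.mem_preimage, Set.mem_insert_iff, Set.mem_singleton_iff] at hxcl
  rcases hxcl with h | h <;> linarith

lemma left_side {f : ℝ → ℝ} (hf : PeriphContinuous f)
    (hgr : IsClosed {p : ℝ × ℝ | p.2 = f p.1}) (x : ℝ) {ε : ℝ} (hε : 0 < ε) :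
    ∃ δ > 0, ∀ y, x - δ < y → y < x → |f y - f x| ≤ ε := by
  by_contra h
  push_neg at h
  have H : ∀ δ > 0, ∃ u, x - δ < u ∧ u < x ∧ ε < |f u - f x| := by
    intro δ hδ
    obtain ⟨y, hy1, hy2, hy3⟩ := h δ hδ
    exact ⟨y, hy1, hy2, hy3⟩
  have hC : IsClosed (f ⁻¹' Metric.closedBall (f x) ε) :=
    closedGraph_preimage_compact hgr (isCompact_closedBall _ _)
  have key : ∀ δ > 0, ∃ t, x - δ < t ∧ t < x ∧ |f t - f x| = ε := by
    intro δ hδ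
    obtain ⟨b, hb1, hb2, hb3⟩ := left_cluster hf x hδ hε
    obtain ⟨u, hu1, hu2, hu3⟩ := H (x - b) (by linarith)
    have hub : b < u := by linarith
    set T := f ⁻¹' Metric.closedBall (f x) ε ∩ Icc b u with hT
    have hTclosed : IsClosed T := hC.inter isClosed_Icc
    have hbT : b ∈ T := by
      refine ⟨?_, ⟨le_refl _, hub.le⟩⟩
      rw [Set.mem_preimage, Metric.mem_closedBall, Real.dist_eq]
      exact hb3.le
    have hTbdd : BddAbove T := ⟨u, fun t ht => ht.2.2⟩
    set t := sSup T with ht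
    have htT : t ∈ T := hTclosed.csSup_mem ⟨b, hbT⟩ hTbdd
    have hut : t ≤ u := csSup_le ⟨b, hbT⟩ (fun s hs => hs.2.2)
    have hunotC : u ∉ f ⁻¹' Metric.closedBall (f x) ε := by
      rw [Set.mem_preimage, Metric.mem_closedBall, Real.dist_eq]
      exact not_le.mpr hu3
    have hune : t ≠ u := fun h => hunotC (h ▸ htT.1)
    have hut' : t < u := lt_of_le_of_ne hut hune
    have hbig : ∀ s, t < s → s ≤ u → ε < |f s - f x| := by
      intro s hs1 hs2
      by_contra hcon
      push_neg at hcon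
      have : s ∈ T := by
        refine ⟨?_, ⟨by linarith [htT.2.1], hs2⟩⟩
        rw [Set.mem_preimage, Metric.mem_closedBall, Real.dist_eq]
        exact hcon
      exact absurd (le_csSup hTbdd this) (not_le.mpr hs1)
    have hge : ε ≤ |f t - f x| := by
      by_contra hcon
      push_neg at hcon
      obtain ⟨s, hs1, hs2, hs3⟩ := right_cluster hf t (show (0:ℝ) < u - t by linarith)
        (show (0:ℝ) < ε - |f t - f x| by linarith)
      have h1 := hbig s hs1 (by linarith)
      have h2 : |f s - f x| ≤ |f s - f t| + |f t - f x| := abs_sub_le _ _ _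
      linarith
    have hle : |f t - f x| ≤ ε := by
      have := htT.1
      rw [Set.mem_preimage, Metric.mem_closedBall, Real.dist_eq] at this
      exact this
    exact ⟨t, by linarith [htT.2.1], by linarith, le_antisymm hle hge⟩
  have hC' : IsClosed (f ⁻¹' ({f x - ε, f x + ε} : Set ℝ)) :=
    closedGraph_preimage_compact hgr ((Set.finite_singleton _).insert _).isCompact
  have hxcl : x ∈ closure (f ⁻¹' ({f x - ε, f x + ε} : Set ℝ)) := by
    rw [Metric.mem_closure_iff]
    intro ζ hζ
    obtain ⟨t, ht1, ht2, ht3⟩ := key ζ hζ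
    refine ⟨t, ?_, ?_⟩
    · rcases abs_eq hε.le |>.mp ht3 with h | h
      · right; rw [Set.mem_singleton_iff]; linarith
      · left; show t ∈ f ⁻¹' {f x - ε}; rw [Set.mem_preimage, Set.mem_singleton_iff]; linarith
    · rw [Real.dist_eq, abs_lt]; constructor <;> linarith
  rw [hC'.closure_eq] at hxcl
  simp only [Set.mem_preimage, Set.mem_insert_iff, Set.mem_singleton_iff] at hxcl
  rcases hxcl with h | h <;> linarith

theorem stmt_18 (f : ℝ → ℝ) (hf : PeriphContinuous f)
    (hgr : IsClosed {p : ℝ × ℝ | p.2 = f p.1}) : Continuous f := by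
  rw [continuous_iff_continuousAt]
  intro x
  rw [Metric.continuousAt_iff]
  intro ε hε
  have hε2 : 0 < ε / 2 := by linarith
  obtain ⟨δR, hδR, hR⟩ := right_side hf hgr x hε2
  obtain ⟨δL, hδL, hL⟩ := left_side hf hgr x hε2
  refine ⟨min δL δR, lt_min hδL hδR, fun {y} hy => ?_⟩
  rw [Real.dist_eq] at hy
  rw [Real.dist_eq]
  rcases lt_trichotomy y x with h | h | h
  · have h1 : x - δL < y := by
      cases abs_lt.mp hy with
      | intro h1 h2 => have := min_le_left δL δR; linarith
    have := hL y h1 h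
    linarith
  · subst h; simpa using hε
  · have h1 : y < x + δR := by
      cases abs_lt.mp hy with
      | intro h1 h2 => have := min_le_right δL δR; linarith
    have := hR y h h1
    linarith
end

section
/- Every Darboux function f : ℝ → ℝ with closed graph is continuous. -/
/-- A function `f : X → ℝ` is *Darboux* if the image of every connected set is
connected. -/
def DarbouxFn {X : Type*} [TopologicalSpace X] (f : X → ℝ) : Prop :=
  ∀ C : Set X, IsPreconnected C → IsPreconnected (f '' C)

/-- If a function has closed graph and some value `c` is attained arbitrarily
close to `x₀`, then `c = f x₀`. -/
lemma key_closed_graph (f : ℝ → ℝ)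
    (hgr : IsClosed {p : ℝ × ℝ | p.2 = f p.1}) (x₀ c : ℝ)
    (h : ∀ δ > (0:ℝ), ∃ t, |t - x₀| < δ ∧ f t = c) : c = f x₀ := by
  have hsel : ∀ n : ℕ, ∃ t, |t - x₀| < 1/(n+1) ∧ f t = c := by
    intro n
    exact h _ (by positivity)
  choose t ht hc using hsel
  have htend : Filter.Tendsto t Filter.atTop (nhds x₀) := by
    rw [tendsto_iff_dist_tendsto_zero]
    apply squeeze_zero (fun n => dist_nonneg) (fun n => le_of_lt (ht n))
    exact tendsto_one_div_add_atTop_nhds_zero_nat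
  have htend2 : Filter.Tendsto (fun n => (t n, c)) Filter.atTop (nhds (x₀, c)) := by
    exact htend.prodMk_nhds tendsto_const_nhds
  have : (x₀, c) ∈ {p : ℝ × ℝ | p.2 = f p.1} :=
    hgr.mem_of_tendsto htend2 (Filter.Eventually.of_forall fun n => (hc n).symm)
  exact this

theorem stmt_19 (f : ℝ → ℝ) (hf : DarbouxFn f)
    (hgr : IsClosed {p : ℝ × ℝ | p.2 = f p.1}) : Continuous f := by
  rw [Metric.continuous_iff]
  intro x ε hε
  by_contra hcon
  push_neg at hcon
  -- for each δ>0 there is y close to x with |f y - f x| ≥ ε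
  have H : ∀ δ > (0:ℝ), ∃ y, |y - x| < δ ∧ ε ≤ |f y - f x| := by
    intro δ hδ
    obtain ⟨y, hy1, hy2⟩ := hcon δ hδ
    exact ⟨y, by simpa [Real.dist_eq] using hy1, by simpa [Real.dist_eq] using hy2⟩
  -- one side holds for all δ
  have Hside : (∀ δ > (0:ℝ), ∃ y, |y - x| < δ ∧ f x + ε ≤ f y) ∨
      (∀ δ > (0:ℝ), ∃ y, |y - x| < δ ∧ f y ≤ f x - ε) := by
    by_contra hs
    push_neg at hs
    obtain ⟨⟨δ₁, hδ₁, h1⟩, ⟨δ₂, hδ₂, h2⟩⟩ := hs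
    obtain ⟨y, hy1, hy2⟩ := H (min δ₁ δ₂) (lt_min hδ₁ hδ₂)
    rcases le_or_gt (f x) (f y) with hle | hlt
    · have : f x + ε ≤ f y := by
        have := le_abs_self (f y - f x)
        have habs : |f y - f x| = f y - f x := abs_of_nonneg (by linarith)
        linarith [hy2, habs ▸ hy2]
      exact absurd this (not_le.mpr (h1 y (lt_of_lt_of_le hy1 (min_le_left _ _))))
    · have : f y ≤ f x - ε := by
        have habs : |f y - f x| = f x - f y := by
          rw [abs_sub_comm]; exact abs_of_nonneg (by linarith)
        rw [habs] at hy2; linarith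
      exact absurd this (not_le.mpr (h2 y (lt_of_lt_of_le hy1 (min_le_right _ _))))
  -- IVT step via Darboux
  have ivt : ∀ (c : ℝ), (∀ δ > (0:ℝ), ∃ y, |y - x| < δ ∧ (c ∈ Set.Icc (min (f x) (f y)) (max (f x) (f y)))) →
      ∀ δ > (0:ℝ), ∃ t, |t - x| < δ ∧ f t = c := by
    intro c hc δ hδ
    obtain ⟨y, hy1, hy2⟩ := hc δ hδ
    have hpc : IsPreconnected (f '' Set.uIcc x y) := hf _ isPreconnected_uIcc
    have hfx : f x ∈ f '' Set.uIcc x y := ⟨x, Set.left_mem_uIcc, rfl⟩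
    have hfy : f y ∈ f '' Set.uIcc x y := ⟨y, Set.right_mem_uIcc, rfl⟩
    have hsub : Set.Icc (min (f x) (f y)) (max (f x) (f y)) ⊆ f '' Set.uIcc x y := by
      rcases le_total (f x) (f y) with h | h
      · simpa [min_eq_left h, max_eq_right h] using hpc.Icc_subset hfx hfy
      · simpa [min_eq_right h, max_eq_left h] using hpc.Icc_subset hfy hfx
    obtain ⟨t, ht, hft⟩ := hsub hy2
    refine ⟨t, ?_, hft⟩
    have : |t - x| ≤ |y - x| := by
      rw [Set.uIcc_eq_union] at ht
      rcases ht with h | h <;> simp only [Set.mem_Icc] at h <;> rw [abs_le] <;>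
        constructor <;>
        nlinarith [le_abs_self (y - x), neg_abs_le (y - x), h.1, h.2]
    linarith
  rcases Hside with h | h
  · have : f x + ε/2 = f x := by
      apply key_closed_graph f hgr x
      apply ivt
      intro δ hδ
      obtain ⟨y, hy1, hy2⟩ := h δ hδ
      exact ⟨y, hy1, ⟨le_trans (min_le_left _ _) (by linarith), le_trans (by linarith : f x + ε/2 ≤ f y) (le_max_right _ _)⟩⟩
    linarith
  · have : f x - ε/2 = f x := by
      apply key_closed_graph f hgr x
      apply ivt
      intro δ hδ
      obtain ⟨y, hy1, hy2⟩ := h δ hδ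
      exact ⟨y, hy1, ⟨le_trans (min_le_right _ _) (by linarith), le_trans (by linarith : f x - ε/2 ≤ f x) (le_max_left _ _)⟩⟩
    linarith
end
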